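/- arXiv:math/0112266 — 3 statements merged into one kernel-verified Lean document; each statement's English description precedes it below -/
import Mathlib

section
/- A prime uncolorable trail formation whose two contextual curves have different colors (one blue, one purple) has exactly four curves: two blue curves, one red curve, and one red-blue alternating circuit. -/
namespace FourColor

/-- A multigraph: a type of vertices, a type of edges, and an endpoint
assignment sending each edge to an unordered pair of vertices. -/
structure Multigraph (V E : Type) where
  ends : E → Sym2 V

namespace Multigraph

variable {V E : Type}

/-- The number of endpoints of the unordered pair `s` that are equal to `v`
(so a loop at `v` counts twice). -/
def endCount [DecidableEq V] (v : V) (s : Sym2 V) : ℕ :=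
  Sym2.lift ⟨fun a b => (if a = v then 1 else 0) + (if b = v then 1 else 0),
    fun _ _ => Nat.add_comm _ _⟩ s

/-- The degree of a vertex: the number of edge-endpoints at it. -/
def degree [DecidableEq V] [Fintype E] (G : Multigraph V E) (v : V) : ℕ :=
  ∑ e, endCount v (G.ends e)

/-- A cubic graph: every vertex has degree 3. -/
def Cubic [DecidableEq V] [Fintype E] (G : Multigraph V E) : Prop :=
  ∀ v, G.degree v = 3

/-- A loop: an edge whose two endpoints coincide. -/
def IsLoop (G : Multigraph V E) (e : E) : Prop := (G.ends e).IsDiag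

/-- Adjacency via some edge. -/
def Adj (G : Multigraph V E) (u v : V) : Prop := ∃ e, G.ends e = s(u, v)

/-- Connectivity: any two vertices are joined by a walk. -/
def Connected (G : Multigraph V E) : Prop :=
  ∀ u v : V, Relation.ReflTransGen G.Adj u v

/-- An isthmus (bridge): an edge whose deletion destroys some reachability. -/
def IsBridge (G : Multigraph V E) (e₀ : E) : Prop :=
  ∃ u v : V, Relation.ReflTransGen G.Adj u v ∧
    ¬ Relation.ReflTransGen (fun a b => ∃ e, e ≠ e₀ ∧ G.ends e = s(a, b)) u v

def Bridgeless (G : Multigraph V E) : Prop := ∀ e, ¬ G.IsBridge e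

/-- A proper edge 3-coloring: distinct edges at a common vertex receive
distinct colors, and all three colors appear at every vertex. -/
def Proper (G : Multigraph V E) (c : E → Fin 3) : Prop :=
  (∀ (v : V) (e₁ e₂ : E), v ∈ G.ends e₁ → v ∈ G.ends e₂ → e₁ ≠ e₂ → c e₁ ≠ c e₂) ∧
  (∀ (v : V) (k : Fin 3), ∃ e, v ∈ G.ends e ∧ c e = k)

/-- A plane (planar) multigraph: it admits a topological embedding in the
plane, vertices as points and edges as arcs meeting only at endpoints. -/
def Planar (G : Multigraph V E) : Prop :=
  ∃ (pos : V → ℝ × ℝ) (γ : E → ℝ → ℝ × ℝ),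
    Function.Injective pos ∧
    (∀ e, Continuous (γ e)) ∧
    (∀ e, ∃ u v : V, G.ends e = s(u, v) ∧ γ e 0 = pos u ∧ γ e 1 = pos v) ∧
    (∀ e, Set.InjOn (γ e) (Set.Ico (0:ℝ) 1)) ∧
    (∀ e, ∀ t ∈ Set.Ioo (0:ℝ) 1, ∀ v, γ e t ≠ pos v) ∧
    (∀ e₁ e₂, e₁ ≠ e₂ → ∀ t₁ ∈ Set.Ioo (0:ℝ) 1, ∀ t₂ ∈ Set.Ioo (0:ℝ) 1, γ e₁ t₁ ≠ γ e₂ t₂)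


/-- The setoid on two-colored edges whose classes are the two-colored (Kempe)
circuits for the colors `k₁, k₂`: the equivalence generated by sharing a vertex. -/
def kempeSetoid (G : Multigraph V E) (c : E → Fin 3) (k₁ k₂ : Fin 3) :
    Setoid {e : E // c e = k₁ ∨ c e = k₂} :=
  Relation.EqvGen.setoid (fun x y => ∃ v : V, v ∈ G.ends x.1 ∧ v ∈ G.ends y.1)

/-- The number of two-colored (Kempe) circuits in the colors `k₁, k₂`. -/
noncomputable def kempeCount (G : Multigraph V E) (c : E → Fin 3) (k₁ k₂ : Fin 3) : ℕ :=
  Nat.card (Quotient (G.kempeSetoid c k₁ k₂))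

/-- `Δ(G,c)`: the total number of two-colored circuits, over all unordered
pairs of distinct colors. -/
noncomputable def delta (G : Multigraph V E) (c : E → Fin 3) : ℕ :=
  Nat.card ((p : {p : Fin 3 × Fin 3 // p.1 < p.2}) × Quotient (G.kempeSetoid c p.1.1 p.1.2))

/-- Interchange the colors `k₁` and `k₂`. -/
def swapColor (k₁ k₂ x : Fin 3) : Fin 3 :=
  if x = k₁ then k₂ else if x = k₂ then k₁ else x

/-- One step of connectivity inside the two-colored subgraph. -/
def KempeRel (G : Multigraph V E) (c : E → Fin 3) (k₁ k₂ : Fin 3) (e f : E) : Prop :=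
  (c e = k₁ ∨ c e = k₂) ∧ (c f = k₁ ∨ c f = k₂) ∧ ∃ v : V, v ∈ G.ends e ∧ v ∈ G.ends f

/-- `c'` is obtained from `c` by a simple operation: interchanging the two
colors `k₁, k₂` along one Kempe circuit (the one through `e₀`). -/
def IsKempeSwap (G : Multigraph V E) (c c' : E → Fin 3) : Prop :=
  ∃ (k₁ k₂ : Fin 3) (e₀ : E), k₁ ≠ k₂ ∧ (c e₀ = k₁ ∨ c e₀ = k₂) ∧
    ∀ e : E,
      (Relation.ReflTransGen (G.KempeRel c k₁ k₂) e₀ e → c' e = swapColor k₁ k₂ (c e)) ∧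
      (¬ Relation.ReflTransGen (G.KempeRel c k₁ k₂) e₀ e → c' e = c e)

/-- `c` is a formation (proper coloring) of all of `G` except the empty edge
`e₀` with endpoints `u, v`: away from `u, v` the coloring is proper with all
three colors at every vertex, while at each of the suppressed degree-2
endpoints `u` and `v` the two remaining edges carry a common color (the color
of the contextual curve there). -/
def FormatesDeleted (G : Multigraph V E) (e₀ : E) (u v : V) (c : E → Fin 3) : Prop :=
  (∀ (w : V) (e₁ e₂ : E), e₁ ≠ e₀ → e₂ ≠ e₀ → w ∈ G.ends e₁ → w ∈ G.ends e₂ →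
      e₁ ≠ e₂ → w ≠ u → w ≠ v → c e₁ ≠ c e₂) ∧
  (∀ w : V, w ≠ u → w ≠ v → ∀ k : Fin 3, ∃ e, e ≠ e₀ ∧ w ∈ G.ends e ∧ c e = k) ∧
  (∀ e₁ e₂ : E, e₁ ≠ e₀ → e₂ ≠ e₀ → u ∈ G.ends e₁ → u ∈ G.ends e₂ → c e₁ = c e₂) ∧
  (∀ e₁ e₂ : E, e₁ ≠ e₀ → e₂ ≠ e₀ → v ∈ G.ends e₁ → v ∈ G.ends e₂ → c e₁ = c e₂)

/-- Kempe circuits of the coloring of the graph with the empty edge `e₀` deleted. -/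
def kempeSetoidD (G : Multigraph V E) (e₀ : E) (c : E → Fin 3) (k₁ k₂ : Fin 3) :
    Setoid {e : E // e ≠ e₀ ∧ (c e = k₁ ∨ c e = k₂)} :=
  Relation.EqvGen.setoid (fun x y => ∃ w : V, w ∈ G.ends x.1 ∧ w ∈ G.ends y.1)

/-- The number of two-colored circuits in colors `k₁ k₂` avoiding the empty edge `e₀`. -/
noncomputable def kempeCountD (G : Multigraph V E) (e₀ : E) (c : E → Fin 3)
    (k₁ k₂ : Fin 3) : ℕ :=
  Nat.card (Quotient (G.kempeSetoidD e₀ c k₁ k₂))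

/-- The formation `c` for the graph deleted at the empty edge `e₀` is
unfactored (prime): every curve, i.e. every two-colored circuit, passes
through one of the endpoints `u, v` of the empty edge. -/
def Unfactored (G : Multigraph V E) (e₀ : E) (u v : V) (c : E → Fin 3) : Prop :=
  ∀ k₁ k₂ : Fin 3, k₁ ≠ k₂ →
    ∀ x : {e : E // e ≠ e₀ ∧ (c e = k₁ ∨ c e = k₂)},
      ∃ y : {e : E // e ≠ e₀ ∧ (c e = k₁ ∨ c e = k₂)},
        (G.kempeSetoidD e₀ c k₁ k₂).r x y ∧ (u ∈ G.ends y.1 ∨ v ∈ G.ends y.1)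

end Multigraph

end FourColor

namespace FourColor
namespace Multigraph

variable {V E : Type} [DecidableEq V]

lemma endCount_mk (x y w : V) :
    endCount w s(x, y) = (if x = w then 1 else 0) + (if y = w then 1 else 0) := by
  simp [endCount]

lemma endCount_eq_zero_of_not_mem {w : V} {s : Sym2 V} (h : w ∉ s) : endCount w s = 0 := by
  induction s using Sym2.inductionOn with
  | hf x y =>
    simp only [Sym2.mem_iff, not_or] at h
    rw [endCount_mk, if_neg (fun hh => h.1 hh.symm), if_neg (fun hh => h.2 hh.symm)]

lemma one_le_endCount_of_mem {w : V} {s : Sym2 V} (h : w ∈ s) : 1 ≤ endCount w s := by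
  induction s using Sym2.inductionOn with
  | hf x y =>
    rcases Sym2.mem_iff.mp h with rfl | rfl <;> rw [endCount_mk] <;> simp <;> omega

lemma endCount_le_two (w : V) (s : Sym2 V) : endCount w s ≤ 2 := by
  induction s using Sym2.inductionOn with
  | hf x y => rw [endCount_mk]; split <;> split <;> omega

lemma mem_of_endCount_pos {w : V} {s : Sym2 V} (h : 0 < endCount w s) : w ∈ s := by
  by_contra hc
  rw [endCount_eq_zero_of_not_mem hc] at h
  exact Nat.lt_irrefl 0 h

omit [DecidableEq V] in
lemma endCount_eq_of_diag {w : V} {s : Sym2 V} (hd : s.IsDiag) (hm : w ∈ s) :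
    s = s(w, w) := by
  induction s using Sym2.inductionOn with
  | hf x y =>
    rw [Sym2.mk_isDiag_iff] at hd
    subst hd
    rcases Sym2.mem_iff.mp hm with rfl | rfl <;> rfl

lemma endCount_eq_one_of_ne {x y w : V} (hm : w ∈ s(x,y)) (hne : x ≠ y) :
    endCount w s(x, y) = 1 := by
  rcases Sym2.mem_iff.mp hm with rfl | rfl
  · simp [endCount_mk, hne.symm]
  · simp [endCount_mk, hne]

end Multigraph
end FourColor

namespace FourColor
namespace Multigraph
variable {V E : Type} [DecidableEq V]

omit [DecidableEq V] in
lemma sym2_exists (s : Sym2 V) : ∃ x y, s = s(x, y) := by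
  induction s using Sym2.inductionOn with
  | hf x y => exact ⟨x, y, rfl⟩

lemma sum_endCount (T : Finset V) (x y : V) :
    ∑ w ∈ T, endCount w s(x, y) =
      (if x ∈ T then 1 else 0) + (if y ∈ T then 1 else 0) := by
  simp only [endCount_mk]
  rw [Finset.sum_add_distrib, Finset.sum_ite_eq, Finset.sum_ite_eq]

end Multigraph
end FourColor
namespace FourColor

lemma sum_three_ones {E : Type} [Fintype E] [DecidableEq E] (f : E → ℕ) (x y z : E)
    (hxy : x ≠ y) (hxz : x ≠ z) (hyz : y ≠ z)
    (hx : 1 ≤ f x) (hy : 1 ≤ f y) (hz : 1 ≤ f z)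
    (hsum : ∑ e, f e = 3) :
    f x = 1 ∧ f y = 1 ∧ f z = 1 ∧ ∀ e, e ≠ x → e ≠ y → e ≠ z → f e = 0 := by
  classical
  have hT : ({x, y, z} : Finset E) ⊆ Finset.univ := Finset.subset_univ _
  have hTsum : ∑ e ∈ ({x, y, z} : Finset E), f e = f x + f y + f z := by
    rw [Finset.sum_insert (by simp [hxy, hxz]), Finset.sum_insert (by simp [hyz]),
      Finset.sum_singleton, Nat.add_assoc]
  have hsplit := Finset.sum_subset hT (f := f)
  have hrest : ∑ e ∈ Finset.univ \ ({x, y, z} : Finset E), f e = 3 - (f x + f y + f z) := by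
    have := Finset.sum_sdiff hT (f := f)
    omega
  have hle : f x + f y + f z ≤ 3 := by
    have := Finset.sum_le_sum_of_subset hT (f := f)
    omega
  have hzero : ∀ e ∈ Finset.univ \ ({x, y, z} : Finset E), f e = 0 := by
    intro e he
    have h3 : f x + f y + f z = 3 := by omega
    have := Finset.sum_sdiff hT (f := f)
    have hsum0 : ∑ e ∈ Finset.univ \ ({x, y, z} : Finset E), f e = 0 := by omega
    exact Finset.sum_eq_zero_iff.mp hsum0 e he
  refine ⟨by omega, by omega, by omega, fun e hex hey hez => ?_⟩
  exact hzero e (by simp [hex, hey, hez])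

/-- `relIter r a n e`: there is a chain of exactly `n` `r`-steps from `a` to `e`. -/
def relIter {α : Type*} (r : α → α → Prop) (a : α) : ℕ → α → Prop
  | 0, e => e = a
  | (n+1), e => ∃ f, relIter r a n f ∧ r f e

lemma reflTransGen_iff_relIter {α : Type*} (r : α → α → Prop) (a e : α) :
    Relation.ReflTransGen r a e ↔ ∃ n, relIter r a n e := by
  constructor
  · intro h
    induction h with
    | refl => exact ⟨0, rfl⟩
    | tail _ hstep ih => exact ⟨ih.choose + 1, _, ih.choose_spec, hstep⟩
  · rintro ⟨n, hn⟩
    induction n generalizing e with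
    | zero => rw [show e = a from hn]
    | succ n ih =>
      obtain ⟨f, hf, hstep⟩ := hn
      exact (ih f hf).tail hstep

end FourColor
namespace FourColor
namespace Multigraph

/-- Structure at a vertex away from `u, v`: exactly three edges, one of each
color, each simple. -/
lemma internal_struct {V E : Type} [Fintype E] [DecidableEq V] [DecidableEq E]
    (G : Multigraph V E) (e₀ : E) (u v : V) (c : E → Fin 3)
    (hcubic : G.Cubic) (hform : FormatesDeleted G e₀ u v c)
    (w : V) (hwu : w ≠ u) (hwv : w ≠ v) :
    ∃ g₀ g₁ g₂ : E, g₀ ≠ e₀ ∧ g₁ ≠ e₀ ∧ g₂ ≠ e₀ ∧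
      w ∈ G.ends g₀ ∧ w ∈ G.ends g₁ ∧ w ∈ G.ends g₂ ∧
      c g₀ = 0 ∧ c g₁ = 1 ∧ c g₂ = 2 ∧
      endCount w (G.ends g₀) = 1 ∧ endCount w (G.ends g₁) = 1 ∧
      endCount w (G.ends g₂) = 1 ∧
      (∀ e, w ∈ G.ends e → e = g₀ ∨ e = g₁ ∨ e = g₂) := by
  obtain ⟨g₀, h₀0, h₀m, h₀c⟩ := hform.2.1 w hwu hwv 0
  obtain ⟨g₁, h₁0, h₁m, h₁c⟩ := hform.2.1 w hwu hwv 1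
  obtain ⟨g₂, h₂0, h₂m, h₂c⟩ := hform.2.1 w hwu hwv 2
  have h01 : g₀ ≠ g₁ := fun h => by rw [h, h₁c] at h₀c; exact absurd h₀c (by decide)
  have h02 : g₀ ≠ g₂ := fun h => by rw [h, h₂c] at h₀c; exact absurd h₀c (by decide)
  have h12 : g₁ ≠ g₂ := fun h => by rw [h, h₂c] at h₁c; exact absurd h₁c (by decide)
  have hsum := hcubic w
  rw [degree] at hsum
  obtain ⟨e₀1, e₁1, e₂1, hrest⟩ := sum_three_ones (fun e => endCount w (G.ends e)) g₀ g₁ g₂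
    h01 h02 h12 (one_le_endCount_of_mem h₀m) (one_le_endCount_of_mem h₁m)
    (one_le_endCount_of_mem h₂m) hsum
  refine ⟨g₀, g₁, g₂, h₀0, h₁0, h₂0, h₀m, h₁m, h₂m, h₀c, h₁c, h₂c, e₀1, e₁1, e₂1, ?_⟩
  intro e hem
  by_contra hc
  push_neg at hc
  have := hrest e hc.1 hc.2.1 hc.2.2
  have := one_le_endCount_of_mem hem
  omega

end Multigraph
end FourColor
namespace FourColor
namespace Multigraph

open Relation

lemma swap_contra {V E : Type} [Fintype V] [Fintype E] [DecidableEq V] [DecidableEq E]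
    (G : Multigraph V E) (e₀ : E) (u v : V) (c : E → Fin 3)
    (hcubic : G.Cubic) (hends : G.ends e₀ = s(u, v)) (huv : u ≠ v)
    (hform : FormatesDeleted G e₀ u v c)
    (hu_purple : ∀ e, e ≠ e₀ → u ∈ G.ends e → c e = 2)
    (hv_blue : ∀ e, e ≠ e₀ → v ∈ G.ends e → c e = 1)
    (a b d₁ d₂ : E) (hab : a ≠ b) (hd : d₁ ≠ d₂)
    (ha0 : a ≠ e₀) (hb0 : b ≠ e₀) (hd10 : d₁ ≠ e₀) (hd20 : d₂ ≠ e₀)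
    (hau : u ∈ G.ends a) (hbu : u ∈ G.ends b)
    (hd1v : v ∈ G.ends d₁) (hd2v : v ∈ G.ends d₂)
    (hreach : Relation.ReflTransGen
      (fun e f => (e ≠ e₀ ∧ (c e = 1 ∨ c e = 2)) ∧ (f ≠ e₀ ∧ (c f = 1 ∨ c f = 2)) ∧
        ∃ w, w ≠ u ∧ w ≠ v ∧ w ∈ G.ends e ∧ w ∈ G.ends f) a d₁) :
    ∃ c' : E → Fin 3, G.Proper c' := by
  classical
  set inK : E → Prop := fun e => e ≠ e₀ ∧ (c e = 1 ∨ c e = 2) with hinK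
  set R : E → E → Prop := fun e f => inK e ∧ inK f ∧
      ∃ w, w ≠ u ∧ w ≠ v ∧ w ∈ G.ends e ∧ w ∈ G.ends f with hRdef
  have hreach' : Relation.ReflTransGen R a d₁ := hreach
  -- colors of the four boundary edges
  have hca : c a = 2 := hu_purple a ha0 hau
  have hcb : c b = 2 := hu_purple b hb0 hbu
  have hcd1 : c d₁ = 1 := hv_blue d₁ hd10 hd1v
  have hcd2 : c d₂ = 1 := hv_blue d₂ hd20 hd2v
  have hKa : inK a := ⟨ha0, Or.inr hca⟩
  have hKb : inK b := ⟨hb0, Or.inr hcb⟩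
  have hKd1 : inK d₁ := ⟨hd10, Or.inl hcd1⟩
  have hKd2 : inK d₂ := ⟨hd20, Or.inl hcd2⟩
  have had1 : a ≠ d₁ := fun h => by rw [h, hcd1] at hca; exact absurd hca (by decide)
  have hue0 : u ∈ G.ends e₀ := by rw [hends]; exact Sym2.mem_mk_left _ _
  have hve0 : v ∈ G.ends e₀ := by rw [hends]; exact Sym2.mem_mk_right _ _
  have hcue0 : endCount u (G.ends e₀) = 1 := by
    rw [hends]; exact endCount_eq_one_of_ne (Sym2.mem_mk_left _ _) huv
  have hcve0 : endCount v (G.ends e₀) = 1 := by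
    rw [hends]; exact endCount_eq_one_of_ne (Sym2.mem_mk_right _ _) huv
  -- structure at u
  have hU := sum_three_ones (fun e => endCount u (G.ends e)) e₀ a b (Ne.symm ha0)
      (Ne.symm hb0) hab (by simpa using hcue0.ge) (one_le_endCount_of_mem hau)
      (one_le_endCount_of_mem hbu) (hcubic u)
  obtain ⟨-, hcua, hcub, hurest⟩ := hU
  have hu_edges : ∀ e, u ∈ G.ends e → e = e₀ ∨ e = a ∨ e = b := by
    intro e he
    by_contra hc
    push_neg at hc
    have h0 : endCount u (G.ends e) = 0 := hurest e hc.1 hc.2.1 hc.2.2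
    have := one_le_endCount_of_mem he
    omega
  -- structure at v
  have hVs := sum_three_ones (fun e => endCount v (G.ends e)) e₀ d₁ d₂ (Ne.symm hd10)
      (Ne.symm hd20) hd (by simpa using hcve0.ge) (one_le_endCount_of_mem hd1v)
      (one_le_endCount_of_mem hd2v) (hcubic v)
  obtain ⟨-, hcvd1, hcvd2, hvrest⟩ := hVs
  have hv_edges : ∀ e, v ∈ G.ends e → e = e₀ ∨ e = d₁ ∨ e = d₂ := by
    intro e he
    by_contra hc
    push_neg at hc
    have h0 : endCount v (G.ends e) = 0 := hvrest e hc.1 hc.2.1 hc.2.2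
    have := one_le_endCount_of_mem he
    omega
  have hav : v ∉ G.ends a := fun h => by
    rw [hv_blue a ha0 h] at hca; exact absurd hca (by decide)
  have hbv : v ∉ G.ends b := fun h => by
    rw [hv_blue b hb0 h] at hcb; exact absurd hcb (by decide)
  have hd1u : u ∉ G.ends d₁ := fun h => by
    rw [hu_purple d₁ hd10 h] at hcd1; exact absurd hcd1 (by decide)
  have hd2u : u ∉ G.ends d₂ := fun h => by
    rw [hu_purple d₂ hd20 h] at hcd2; exact absurd hcd2 (by decide)
  -- the Kempe arc S
  set S : Finset E := Finset.univ.filter (fun e => Relation.ReflTransGen R a e) with hSdef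
  have hmemS : ∀ e, e ∈ S ↔ Relation.ReflTransGen R a e := by
    intro e; simp [hSdef]
  have haS : a ∈ S := (hmemS a).mpr Relation.ReflTransGen.refl
  have hd1S : d₁ ∈ S := (hmemS d₁).mpr hreach'
  have hSK : ∀ e ∈ S, inK e := by
    intro e he
    rcases ((hmemS e).mp he).cases_tail with h | ⟨f, _, hstep⟩
    · rw [h]; exact hKa
    · exact hstep.2.1
  have hclosed : ∀ e ∈ S, ∀ f, inK f →
      (∃ w, w ≠ u ∧ w ≠ v ∧ w ∈ G.ends e ∧ w ∈ G.ends f) → f ∈ S := by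
    intro e he f hf hw
    exact (hmemS f).mpr (((hmemS e).mp he).tail ⟨hSK e he, hf, hw⟩)
  -- at an internal vertex there are exactly two K-edges
  have hKat : ∀ w : V, w ≠ u → w ≠ v → ∀ e, inK e → w ∈ G.ends e →
      ∃ g₁ g₂ : E, g₁ ≠ g₂ ∧ inK g₁ ∧ inK g₂ ∧ c g₁ = 1 ∧ c g₂ = 2 ∧
        w ∈ G.ends g₁ ∧ w ∈ G.ends g₂ ∧
        endCount w (G.ends g₁) = 1 ∧ endCount w (G.ends g₂) = 1 ∧
        (∀ f, inK f → w ∈ G.ends f → f = g₁ ∨ f = g₂) := by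
    intro w hwu hwv e hKe hwe
    obtain ⟨g₀, g₁, g₂, h₀0, h₁0, h₂0, h₀m, h₁m, h₂m, h₀c, h₁c, h₂c, e₀1, e₁1, e₂1, hall⟩ :=
      internal_struct G e₀ u v c hcubic hform w hwu hwv
    have hg12 : g₁ ≠ g₂ := fun h => by rw [h, h₂c] at h₁c; exact absurd h₁c (by decide)
    refine ⟨g₁, g₂, hg12, ⟨h₁0, Or.inl h₁c⟩, ⟨h₂0, Or.inr h₂c⟩, h₁c, h₂c, h₁m, h₂m, e₁1, e₂1, ?_⟩
    intro f hKf hwf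
    rcases hall f hwf with rfl | rfl | rfl
    · rcases hKf.2 with h | h <;> (rw [h₀c] at h; exact absurd h (by decide))
    · exact Or.inl rfl
    · exact Or.inr rfl
  have hstar : ∀ w : V, w ≠ u → w ≠ v → ∀ f₁ f₂ f₃, inK f₁ → w ∈ G.ends f₁ →
      inK f₂ → w ∈ G.ends f₂ → inK f₃ → w ∈ G.ends f₃ →
      f₁ = f₂ ∨ f₁ = f₃ ∨ f₂ = f₃ := by
    intro w hwu hwv f₁ f₂ f₃ hK1 hm1 hK2 hm2 hK3 hm3
    obtain ⟨g₁, g₂, _, _, _, _, _, _, _, _, _, hmem⟩ := hKat w hwu hwv f₁ hK1 hm1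
    rcases hmem f₁ hK1 hm1 with rfl | rfl <;> rcases hmem f₂ hK2 hm2 with h2 | h2 <;>
      rcases hmem f₃ hK3 hm3 with h3 | h3 <;> subst h2 <;> first
      | exact Or.inl rfl
      | (subst h3; first | exact Or.inr (Or.inl rfl) | exact Or.inr (Or.inr rfl))
      | exact Or.inr (Or.inr rfl)
  -- the set of internal vertices touched by S
  set Vfin : Finset V :=
    Finset.univ.filter (fun w => w ≠ u ∧ w ≠ v ∧ ∃ e ∈ S, w ∈ G.ends e) with hVdef
  have hmemV : ∀ w, w ∈ Vfin ↔ (w ≠ u ∧ w ≠ v ∧ ∃ e ∈ S, w ∈ G.ends e) := by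
    intro w; simp [hVdef]
  have huV : u ∉ Vfin := fun h => ((hmemV u).mp h).1 rfl
  have hvV : v ∉ Vfin := fun h => ((hmemV v).mp h).2.1 rfl
  -- each vertex of Vfin has exactly two edge-ends in S
  have hvsum : ∀ w ∈ Vfin, ∑ e ∈ S, endCount w (G.ends e) = 2 := by
    intro w hw
    obtain ⟨hwu, hwv, e, heS, hwe⟩ := (hmemV w).mp hw
    obtain ⟨g₁, g₂, hg12, hKg1, hKg2, _, _, hm1, hm2, hec1, hec2, hmem⟩ :=
      hKat w hwu hwv e (hSK e heS) hwe
    have hg1S : g₁ ∈ S := by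
      rcases hmem e (hSK e heS) hwe with rfl | rfl
      · exact heS
      · exact hclosed e heS g₁ hKg1 ⟨w, hwu, hwv, hwe, hm1⟩
    have hg2S : g₂ ∈ S := by
      rcases hmem e (hSK e heS) hwe with rfl | rfl
      · exact hclosed e heS g₂ hKg2 ⟨w, hwu, hwv, hwe, hm2⟩
      · exact heS
    have hsub : ({g₁, g₂} : Finset E) ⊆ S := by
      intro x hx; rcases Finset.mem_insert.mp hx with rfl | hx
      · exact hg1S
      · rw [Finset.mem_singleton.mp hx]; exact hg2S
    rw [← Finset.sum_subset hsub]
    · rw [Finset.sum_insert (by simpa using hg12), Finset.sum_singleton, hec1, hec2]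
    · intro f hfS hfn
      simp only [Finset.mem_insert, Finset.mem_singleton, not_or] at hfn
      by_contra hne
      have hmemw : w ∈ G.ends f := mem_of_endCount_pos (Nat.pos_of_ne_zero hne)
      rcases hmem f (hSK f hfS) hmemw with h | h
      · exact hfn.1 h
      · exact hfn.2 h
  -- each edge of S has 2 ends in Vfin, except boundary edges which have 1
  have hbdcases : ∀ e ∈ S, (e = a ∨ e = b ∨ e = d₁ ∨ e = d₂) ∨
      (u ∉ G.ends e ∧ v ∉ G.ends e) := by
    intro e heS
    by_cases hu' : u ∈ G.ends e
    · rcases hu_edges e hu' with rfl | rfl | rfl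
      · exact absurd rfl (hSK e heS).1
      · exact Or.inl (Or.inl rfl)
      · exact Or.inl (Or.inr (Or.inl rfl))
    · by_cases hv' : v ∈ G.ends e
      · rcases hv_edges e hv' with rfl | rfl | rfl
        · exact absurd rfl (hSK e heS).1
        · exact Or.inl (Or.inr (Or.inr (Or.inl rfl)))
        · exact Or.inl (Or.inr (Or.inr (Or.inr rfl)))
      · exact Or.inr ⟨hu', hv'⟩
  -- contribution of a boundary edge
  have hone : ∀ (p : V) (e : E), e ∈ S → p ∈ G.ends e → endCount p (G.ends e) = 1 →
      p ∉ Vfin → (∀ z, z ∈ G.ends e → z ≠ p → z ≠ u ∧ z ≠ v) →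
      ∑ w ∈ Vfin, endCount w (G.ends e) = 1 := by
    intro p e heS hpe hec hpV hz
    obtain ⟨x, y, hxy⟩ := sym2_exists (G.ends e)
    rw [hxy] at hpe hec ⊢
    rw [sum_endCount]
    rcases Sym2.mem_iff.mp hpe with rfl | rfl
    · have hyp : y ≠ p := by
        intro h; rw [h] at hec; simp [endCount_mk] at hec
      have hyV : y ∈ Vfin := by
        have hzy := hz y (by rw [hxy]; exact Sym2.mem_mk_right _ _) hyp
        exact (hmemV y).mpr ⟨hzy.1, hzy.2, e, heS, by rw [hxy]; exact Sym2.mem_mk_right _ _⟩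
      rw [if_neg hpV, if_pos hyV]
    · have hxp : x ≠ p := by
        intro h; rw [h] at hec; simp [endCount_mk] at hec
      have hxV : x ∈ Vfin := by
        have hzx := hz x (by rw [hxy]; exact Sym2.mem_mk_left _ _) hxp
        exact (hmemV x).mpr ⟨hzx.1, hzx.2, e, heS, by rw [hxy]; exact Sym2.mem_mk_left _ _⟩
      rw [if_pos hxV, if_neg hpV]
  have hesum : ∀ e ∈ S, ∑ w ∈ Vfin, endCount w (G.ends e) =
      (if e = a ∨ e = b ∨ e = d₁ ∨ e = d₂ then 1 else 2) := by
    intro e heS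
    rcases hbdcases e heS with hbd | ⟨hnu, hnv⟩
    · rw [if_pos hbd]
      rcases hbd with rfl | rfl | rfl | rfl
      · exact hone u e heS hau hcua huV
          (fun z hze hzp => ⟨hzp, fun h => hav (h ▸ hze)⟩)
      · exact hone u e heS hbu hcub huV
          (fun z hze hzp => ⟨hzp, fun h => hbv (h ▸ hze)⟩)
      · exact hone v e heS hd1v hcvd1 hvV
          (fun z hze hzp => ⟨fun h => hd1u (h ▸ hze), hzp⟩)
      · exact hone v e heS hd2v hcvd2 hvV
          (fun z hze hzp => ⟨fun h => hd2u (h ▸ hze), hzp⟩)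
    · rw [if_neg]
      · obtain ⟨x, y, hxy⟩ := sym2_exists (G.ends e)
        have hxV : x ∈ Vfin := (hmemV x).mpr
          ⟨fun h => hnu (h ▸ (hxy ▸ Sym2.mem_mk_left x y)),
           fun h => hnv (h ▸ (hxy ▸ Sym2.mem_mk_left x y)),
           e, heS, hxy ▸ Sym2.mem_mk_left x y⟩
        have hyV : y ∈ Vfin := (hmemV y).mpr
          ⟨fun h => hnu (h ▸ (hxy ▸ Sym2.mem_mk_right x y)),
           fun h => hnv (h ▸ (hxy ▸ Sym2.mem_mk_right x y)),
           e, heS, hxy ▸ Sym2.mem_mk_right x y⟩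
        rw [hxy, sum_endCount, if_pos hxV, if_pos hyV]
      · rintro (rfl | rfl | rfl | rfl)
        · exact hnu hau
        · exact hnu hbu
        · exact hnv hd1v
        · exact hnv hd2v
  -- double counting
  set bnd : E → Prop := fun e => e = a ∨ e = b ∨ e = d₁ ∨ e = d₂ with hbnd
  have hdc : 2 * Vfin.card + (S.filter bnd).card = 2 * S.card := by
    have h1 : ∑ w ∈ Vfin, ∑ e ∈ S, endCount w (G.ends e) = 2 * Vfin.card := by
      rw [Finset.sum_congr rfl hvsum, Finset.sum_const, smul_eq_mul, Nat.mul_comm]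
    have h2 : ∑ e ∈ S, ∑ w ∈ Vfin, endCount w (G.ends e) =
        ∑ e ∈ S, (if bnd e then 1 else 2) := Finset.sum_congr rfl hesum
    have h3 : ∑ e ∈ S, (if bnd e then 1 else 2) + (S.filter bnd).card = 2 * S.card := by
      rw [Finset.card_filter, ← Finset.sum_add_distrib]
      have : ∀ e ∈ S, ((if bnd e then 1 else 2) + if bnd e then 1 else 0) = 2 := by
        intro e _; split <;> rfl
      rw [Finset.sum_congr rfl this, Finset.sum_const, smul_eq_mul, Nat.mul_comm]
    rw [← h1, ← Finset.sum_comm, h2]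
    exact h3
  -- distance function for the injection
  set dd : E → ℕ := fun e => if h : ∃ n, relIter R a n e then Nat.find h else 0 with hdd
  have hstepdown : ∀ e, Relation.ReflTransGen R a e → e ≠ a →
      ∃ w, (w ≠ u ∧ w ≠ v ∧ w ∈ G.ends e) ∧
        ∃ f, Relation.ReflTransGen R a f ∧ w ∈ G.ends f ∧ dd f < dd e := by
    intro e he hea
    have hex : ∃ n, relIter R a n e := (reflTransGen_iff_relIter R a e).mp he
    have hdde : dd e = Nat.find hex := dif_pos hex
    have hspec := Nat.find_spec hex
    rcases hn : Nat.find hex with _ | n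
    · rw [hn] at hspec; exact absurd hspec hea
    · rw [hn] at hspec
      obtain ⟨f, hf, hKe', hKf', w, hwu, hwv, hwf, hwe⟩ := hspec
      have hexf : ∃ m, relIter R a m f := ⟨n, hf⟩
      have hddf : dd f = Nat.find hexf := dif_pos hexf
      refine ⟨w, ⟨hwu, hwv, hwe⟩, f, (reflTransGen_iff_relIter R a f).mpr hexf, hwf, ?_⟩
      rw [hddf, hdde, hn]
      exact Nat.lt_succ_of_le (Nat.find_le hf)
  set φ : E → V := fun e =>
    if h : ∃ w, (w ≠ u ∧ w ≠ v ∧ w ∈ G.ends e) ∧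
        ∃ f, Relation.ReflTransGen R a f ∧ w ∈ G.ends f ∧ dd f < dd e
    then h.choose else u with hφ
  have hφspec : ∀ e ∈ S.erase a, (φ e ≠ u ∧ φ e ≠ v ∧ φ e ∈ G.ends e) ∧
      ∃ f, Relation.ReflTransGen R a f ∧ φ e ∈ G.ends f ∧ dd f < dd e := by
    intro e he
    have hea := Finset.ne_of_mem_erase he
    have heS := Finset.mem_of_mem_erase he
    have hx := hstepdown e ((hmemS e).mp heS) hea
    rw [hφ]
    simp only [dif_pos hx]
    exact hx.choose_spec
  have hcard2 : (S.erase a).card ≤ Vfin.card := by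
    apply Finset.card_le_card_of_injOn φ
    · intro e he
      obtain ⟨⟨h1, h2, h3⟩, -⟩ := hφspec e he
      exact (hmemV _).mpr ⟨h1, h2, e, Finset.mem_of_mem_erase he, h3⟩
    · intro e₁ he₁ e₂ he₂ heq
      by_contra hne
      obtain ⟨⟨hw1u, hw1v, hw1e⟩, f₁, hf₁r, hwf₁, hlt₁⟩ := hφspec e₁ he₁
      obtain ⟨⟨hw2u, hw2v, hw2e⟩, f₂, hf₂r, hwf₂, hlt₂⟩ := hφspec e₂ he₂
      rw [heq] at hw1e
      have hKe₁ : inK e₁ := hSK e₁ (Finset.mem_of_mem_erase he₁)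
      have hKe₂ : inK e₂ := hSK e₂ (Finset.mem_of_mem_erase he₂)
      have hKf₁ : inK f₁ := hSK f₁ ((hmemS f₁).mpr hf₁r)
      have hKf₂ : inK f₂ := hSK f₂ ((hmemS f₂).mpr hf₂r)
      rw [heq] at hwf₁
      have h₁ := hstar (φ e₂) hw2u hw2v f₁ e₁ e₂ hKf₁ hwf₁ hKe₁ hw1e hKe₂ hw2e
      have h₂ := hstar (φ e₂) hw2u hw2v f₂ e₁ e₂ hKf₂ hwf₂ hKe₁ hw1e hKe₂ hw2e
      rcases h₁ with rfl | rfl | h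
      · exact absurd hlt₁ (Nat.lt_irrefl _)
      · rcases h₂ with rfl | rfl | h
        · omega
        · exact absurd hlt₂ (Nat.lt_irrefl _)
        · exact hne h
      · exact hne h
  have hbS : (S.filter bnd).card ≤ 2 := by
    have hSc : (S.erase a).card = S.card - 1 := Finset.card_erase_of_mem haS
    have hpos : 1 ≤ S.card := Finset.card_pos.mpr ⟨a, haS⟩
    omega
  have hfeq : S.filter bnd = {a, d₁} := by
    symm
    apply Finset.eq_of_subset_of_card_le
    · intro x hx
      rcases Finset.mem_insert.mp hx with rfl | hx
      · exact Finset.mem_filter.mpr ⟨haS, Or.inl rfl⟩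
      · rw [Finset.mem_singleton.mp hx]
        exact Finset.mem_filter.mpr ⟨hd1S, Or.inr (Or.inr (Or.inl rfl))⟩
    · calc (S.filter bnd).card ≤ 2 := hbS
        _ = ({a, d₁} : Finset E).card := by rw [Finset.card_insert_of_notMem (by simpa using had1), Finset.card_singleton]
  have hbnS : b ∉ S := by
    intro hbS'
    have : b ∈ S.filter bnd := Finset.mem_filter.mpr ⟨hbS', Or.inr (Or.inl rfl)⟩
    rw [hfeq] at this
    rcases Finset.mem_insert.mp this with rfl | h
    · exact hab rfl
    · rw [Finset.mem_singleton.mp h, hcd1] at hcb; exact absurd hcb (by decide)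
  have hd2nS : d₂ ∉ S := by
    intro hS'
    have : d₂ ∈ S.filter bnd := Finset.mem_filter.mpr ⟨hS', Or.inr (Or.inr (Or.inr rfl))⟩
    rw [hfeq] at this
    rcases Finset.mem_insert.mp this with rfl | h
    · rw [hcd2] at hca; exact absurd hca (by decide)
    · exact hd (Finset.mem_singleton.mp h).symm
  -- the recoloring
  set c' : E → Fin 3 := fun e => if e = e₀ then 0 else if e ∈ S then swapColor 1 2 (c e) else c e
    with hc'
  have hc'e₀ : c' e₀ = 0 := by simp [hc']
  have hval : ∀ e, e ≠ e₀ → e ∈ S → c' e = swapColor 1 2 (c e) := by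
    intro e h hS'; simp [hc', h, hS']
  have hvaln : ∀ e, e ≠ e₀ → e ∉ S → c' e = c e := by
    intro e h hS'; simp [hc', h, hS']
  have hc'a : c' a = 1 := by rw [hval a ha0 haS, hca]; decide
  have hc'b : c' b = 2 := by rw [hvaln b hb0 hbnS, hcb]
  have hc'd1 : c' d₁ = 2 := by rw [hval d₁ hd10 hd1S, hcd1]; decide
  have hc'd2 : c' d₂ = 1 := by rw [hvaln d₂ hd20 hd2nS, hcd2]
  have hint : ∀ w, w ≠ u → w ≠ v → ∃ g₀ g₁ g₂ : E,
      w ∈ G.ends g₀ ∧ w ∈ G.ends g₁ ∧ w ∈ G.ends g₂ ∧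
      (∀ e, w ∈ G.ends e → e = g₀ ∨ e = g₁ ∨ e = g₂) ∧
      c' g₀ = 0 ∧ ((c' g₁ = 1 ∧ c' g₂ = 2) ∨ (c' g₁ = 2 ∧ c' g₂ = 1)) := by
    intro w hwu hwv
    obtain ⟨g₀, g₁, g₂, h₀0, h₁0, h₂0, h₀m, h₁m, h₂m, h₀c, h₁c, h₂c, -, -, -, hall⟩ :=
      internal_struct G e₀ u v c hcubic hform w hwu hwv
    have hg0S : g₀ ∉ S := fun h => by
      rcases (hSK g₀ h).2 with hcc | hcc <;> (rw [h₀c] at hcc; exact absurd hcc (by decide))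
    have hKg1 : inK g₁ := ⟨h₁0, Or.inl h₁c⟩
    have hKg2 : inK g₂ := ⟨h₂0, Or.inr h₂c⟩
    refine ⟨g₀, g₁, g₂, h₀m, h₁m, h₂m, hall, by rw [hvaln g₀ h₀0 hg0S, h₀c], ?_⟩
    by_cases h1S : g₁ ∈ S
    · have h2S : g₂ ∈ S := hclosed g₁ h1S g₂ hKg2 ⟨w, hwu, hwv, h₁m, h₂m⟩
      right
      rw [hval g₁ h₁0 h1S, hval g₂ h₂0 h2S, h₁c, h₂c]
      exact ⟨by decide, by decide⟩
    · have h2S : g₂ ∉ S := fun h => h1S (hclosed g₂ h g₁ hKg1 ⟨w, hwu, hwv, h₂m, h₁m⟩)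
      left
      rw [hvaln g₁ h₁0 h1S, hvaln g₂ h₂0 h2S, h₁c, h₂c]
      exact ⟨rfl, rfl⟩
  refine ⟨c', ?_, ?_⟩
  · intro w e₁ e₂ h1 h2 hne
    by_cases hwu : w = u
    · subst hwu
      rcases hu_edges e₁ h1 with rfl | rfl | rfl <;>
        rcases hu_edges e₂ h2 with rfl | rfl | rfl <;>
        first
          | exact absurd rfl hne
          | (simp only [hc'e₀, hc'a, hc'b]; decide)
    · by_cases hwv : w = v
      · subst hwv
        rcases hv_edges e₁ h1 with rfl | rfl | rfl <;>
          rcases hv_edges e₂ h2 with rfl | rfl | rfl <;>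
          first
            | exact absurd rfl hne
            | (simp only [hc'e₀, hc'd1, hc'd2]; decide)
      · obtain ⟨g₀, g₁, g₂, -, -, -, hall, h0, h12⟩ := hint w hwu hwv
        rcases h12 with ⟨hA, hB⟩ | ⟨hA, hB⟩ <;>
          rcases hall e₁ h1 with rfl | rfl | rfl <;>
          rcases hall e₂ h2 with rfl | rfl | rfl <;>
          first
            | exact absurd rfl hne
            | (simp only [h0, hA, hB]; decide)
  · intro w k
    by_cases hwu : w = u
    · subst hwu
      fin_cases k
      · exact ⟨e₀, hue0, hc'e₀⟩
      · exact ⟨a, hau, hc'a⟩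
      · exact ⟨b, hbu, hc'b⟩
    · by_cases hwv : w = v
      · subst hwv
        fin_cases k
        · exact ⟨e₀, hve0, hc'e₀⟩
        · exact ⟨d₂, hd2v, hc'd2⟩
        · exact ⟨d₁, hd1v, hc'd1⟩
      · obtain ⟨g₀, g₁, g₂, hm0, hm1, hm2, -, h0, h12⟩ := hint w hwu hwv
        fin_cases k
        · exact ⟨g₀, hm0, h0⟩
        · rcases h12 with ⟨hA, hB⟩ | ⟨hA, hB⟩
          · exact ⟨g₁, hm1, hA⟩
          · exact ⟨g₂, hm2, hB⟩
        · rcases h12 with ⟨hA, hB⟩ | ⟨hA, hB⟩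
          · exact ⟨g₂, hm2, hB⟩
          · exact ⟨g₁, hm1, hA⟩

end Multigraph
end FourColor
namespace FourColor

lemma sum_two_all {E : Type} [Fintype E] [DecidableEq E] (f : E → ℕ) (x y : E)
    (hxy : x ≠ y) (hsum : ∑ e, f e = f x + f y) :
    ∀ e, e ≠ x → e ≠ y → f e = 0 := by
  intro e hex hey
  have hT : ({x, y} : Finset E) ⊆ Finset.univ := Finset.subset_univ _
  have hTsum : ∑ e ∈ ({x, y} : Finset E), f e = f x + f y := by
    rw [Finset.sum_insert (by simpa using hxy), Finset.sum_singleton]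
  have := Finset.sum_sdiff hT (f := f)
  have hz : ∑ e ∈ Finset.univ \ ({x, y} : Finset E), f e = 0 := by omega
  exact Finset.sum_eq_zero_iff.mp hz e (by simp [hex, hey])

namespace Multigraph

lemma eq_diag_of_endCount_eq_two {V : Type} [DecidableEq V] {w : V} {s : Sym2 V}
    (h : endCount w s = 2) : s = s(w, w) := by
  induction s using Sym2.inductionOn with
  | hf x y =>
    rw [endCount_mk] at h
    have hx : x = w := by by_contra hc; rw [if_neg hc] at h; split at h <;> omega
    have hy : y = w := by by_contra hc; rw [if_neg hc] at h; split at h <;> omega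
    rw [hx, hy]

end Multigraph
end FourColor
open FourColor Multigraph

/-- A prime uncolorable trail formation whose two contextual
curves have different colors (one purple, at `u`, and one blue, at `v`) has
exactly four curves: two blue curves, one red curve and one red-blue
alternating circuit.  Colors: red `0`, blue `1`, purple `2`. -/
theorem stmt12 {V E : Type} [Fintype V] [Fintype E] [DecidableEq V]
    (G : Multigraph V E) (e₀ : E) (u v : V) (c : E → Fin 3)
    (hcubic : G.Cubic) (hplanar : G.Planar) (hconn : G.Connected)
    (hends : G.ends e₀ = s(u, v)) (huv : u ≠ v)
    (hform : FormatesDeleted G e₀ u v c)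
    (hu_purple : ∀ e, e ≠ e₀ → u ∈ G.ends e → c e = 2)
    (hv_blue : ∀ e, e ≠ e₀ → v ∈ G.ends e → c e = 1)
    (huncol : ¬ ∃ c' : E → Fin 3, G.Proper c')
    (hprime : Unfactored G e₀ u v c) :
    kempeCountD G e₀ c 0 2 = 1 ∧ kempeCountD G e₀ c 1 2 = 2 ∧
      kempeCountD G e₀ c 0 1 = 1 := by
  classical
  have hcue0 : endCount u (G.ends e₀) = 1 := by
    rw [hends]; exact endCount_eq_one_of_ne (Sym2.mem_mk_left _ _) huv
  have hcve0 : endCount v (G.ends e₀) = 1 := by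
    rw [hends]; exact endCount_eq_one_of_ne (Sym2.mem_mk_right _ _) huv
  -- existence of non-empty edges at u and at v
  have hexu : ∃ e, e ≠ e₀ ∧ u ∈ G.ends e := by
    by_contra hc
    push_neg at hc
    have h1 : ∑ e, endCount u (G.ends e) = endCount u (G.ends e₀) :=
      Finset.sum_eq_single_of_mem e₀ (Finset.mem_univ _)
        (fun b _ hb => endCount_eq_zero_of_not_mem (hc b hb))
    have := hcubic u
    rw [degree] at this
    omega
  have hexv : ∃ e, e ≠ e₀ ∧ v ∈ G.ends e := by
    by_contra hc
    push_neg at hc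
    have h1 : ∑ e, endCount v (G.ends e) = endCount v (G.ends e₀) :=
      Finset.sum_eq_single_of_mem e₀ (Finset.mem_univ _)
        (fun b _ hb => endCount_eq_zero_of_not_mem (hc b hb))
    have := hcubic v
    rw [degree] at this
    omega
  obtain ⟨eu, heu0, heuu⟩ := hexu
  obtain ⟨ev, hev0, hevv⟩ := hexv
  have hceu : c eu = 2 := hu_purple eu heu0 heuu
  have hcev : c ev = 1 := hv_blue ev hev0 hevv
  refine ⟨?_, ?_, ?_⟩
  · -- red-purple circuits: exactly one, through u
    apply Nat.card_eq_one_iff_unique.mpr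
    constructor
    · constructor
      intro x y
      refine Quotient.inductionOn₂ x y (fun x y => ?_)
      obtain ⟨yx, hrx, hmx⟩ := hprime 0 2 (by decide) x
      obtain ⟨yy, hry, hmy⟩ := hprime 0 2 (by decide) y
      have hmxu : u ∈ G.ends yx.1 := by
        rcases hmx with h | h
        · exact h
        · rcases yx.2.2 with hc' | hc' <;>
            (rw [hv_blue yx.1 yx.2.1 h] at hc'; exact absurd hc' (by decide))
      have hmyu : u ∈ G.ends yy.1 := by
        rcases hmy with h | h
        · exact h
        · rcases yy.2.2 with hc' | hc' <;>
            (rw [hv_blue yy.1 yy.2.1 h] at hc'; exact absurd hc' (by decide))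
      have hrx' : Relation.EqvGen
          (fun (p q : {e : E // e ≠ e₀ ∧ (c e = 0 ∨ c e = 2)}) =>
            ∃ w, w ∈ G.ends p.1 ∧ w ∈ G.ends q.1) x yx := hrx
      have hry' : Relation.EqvGen
          (fun (p q : {e : E // e ≠ e₀ ∧ (c e = 0 ∨ c e = 2)}) =>
            ∃ w, w ∈ G.ends p.1 ∧ w ∈ G.ends q.1) y yy := hry
      exact Quotient.sound (Relation.EqvGen.trans _ _ _ hrx'
        (Relation.EqvGen.trans _ _ _ (Relation.EqvGen.rel _ _ ⟨u, hmxu, hmyu⟩)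
          (Relation.EqvGen.symm _ _ hry')))
    · exact ⟨⟦⟨eu, heu0, Or.inr hceu⟩⟧⟩
  · -- blue-purple circuits: exactly two
    apply Nat.card_eq_two_iff.mpr
    set K12 := {e : E // e ≠ e₀ ∧ (c e = 1 ∨ c e = 2)} with hK12
    set xu : K12 := ⟨eu, heu0, Or.inr hceu⟩ with hxu
    set xv : K12 := ⟨ev, hev0, Or.inl hcev⟩ with hxv
    set R : E → E → Prop := fun e f => (e ≠ e₀ ∧ (c e = 1 ∨ c e = 2)) ∧
      (f ≠ e₀ ∧ (c f = 1 ∨ c f = 2)) ∧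
      ∃ w, w ≠ u ∧ w ≠ v ∧ w ∈ G.ends e ∧ w ∈ G.ends f with hRdef
    refine ⟨⟦xu⟧, ⟦xv⟧, ?_, ?_⟩
    · -- the two classes are distinct
      intro heq
      have hEq : Relation.EqvGen
          (fun (p q : K12) => ∃ w, w ∈ G.ends p.1 ∧ w ∈ G.ends q.1) xu xv :=
        Quotient.exact heq
      by_cases hloopu : ∃ ℓ, ℓ ≠ e₀ ∧ u ∈ G.ends ℓ ∧ (G.ends ℓ).IsDiag
      · obtain ⟨ℓ, hℓ0, hℓu, hℓd⟩ := hloopu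
        have hℓends : G.ends ℓ = s(u, u) := endCount_eq_of_diag hℓd hℓu
        have hℓ2 : endCount u (G.ends ℓ) = 2 := by
          rw [hℓends, endCount_mk]; simp
        have hu_only : ∀ e, u ∈ G.ends e → e = e₀ ∨ e = ℓ := by
          intro e he
          by_contra hcn
          push_neg at hcn
          have h0 : endCount u (G.ends e) = 0 := sum_two_all
            (fun e => endCount u (G.ends e)) e₀ ℓ (Ne.symm hℓ0)
            (by show ∑ e, endCount u (G.ends e) = endCount u (G.ends e₀) + endCount u (G.ends ℓ)
                have h := hcubic u; rw [degree] at h; omega) e hcn.1 hcn.2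
          have := one_le_endCount_of_mem he
          omega
        have hinv : ∀ p q : K12,
            Relation.EqvGen (fun (p q : K12) => ∃ w, w ∈ G.ends p.1 ∧ w ∈ G.ends q.1) p q →
            (p.1 = ℓ ↔ q.1 = ℓ) := by
          intro p q h
          induction h with
          | rel p q hpq =>
            obtain ⟨w, hwp, hwq⟩ := hpq
            constructor
            · intro hp
              rw [hp, hℓends] at hwp
              have hw : w = u := by simpa using hwp
              rw [hw] at hwq
              rcases hu_only q.1 hwq with h | h
              · exact absurd h q.2.1
              · exact h
            · intro hq
              rw [hq, hℓends] at hwq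
              have hw : w = u := by simpa using hwq
              rw [hw] at hwp
              rcases hu_only p.1 hwp with h | h
              · exact absurd h p.2.1
              · exact h
          | refl p => exact Iff.rfl
          | symm p q _ ih => exact ih.symm
          | trans p q r _ _ ih1 ih2 => exact ih1.trans ih2
        have heuℓ : eu = ℓ := by
          rcases hu_only eu heuu with h | h
          · exact absurd h heu0
          · exact h
        have hevℓ : ev = ℓ := (hinv xu xv hEq).mp heuℓ
        rw [hevℓ, hℓends] at hevv
        have hvu : v = u := by simpa using hevv
        exact huv hvu.symm
      · by_cases hloopv : ∃ ℓ, ℓ ≠ e₀ ∧ v ∈ G.ends ℓ ∧ (G.ends ℓ).IsDiag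
        · obtain ⟨ℓ, hℓ0, hℓv, hℓd⟩ := hloopv
          have hℓends : G.ends ℓ = s(v, v) := endCount_eq_of_diag hℓd hℓv
          have hℓ2 : endCount v (G.ends ℓ) = 2 := by
            rw [hℓends, endCount_mk]; simp
          have hv_only : ∀ e, v ∈ G.ends e → e = e₀ ∨ e = ℓ := by
            intro e he
            by_contra hcn
            push_neg at hcn
            have h0 : endCount v (G.ends e) = 0 := sum_two_all
              (fun e => endCount v (G.ends e)) e₀ ℓ (Ne.symm hℓ0)
              (by show ∑ e, endCount v (G.ends e) = endCount v (G.ends e₀) + endCount v (G.ends ℓ)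
                  have h := hcubic v; rw [degree] at h; omega) e hcn.1 hcn.2
            have := one_le_endCount_of_mem he
            omega
          have hinv : ∀ p q : K12,
              Relation.EqvGen (fun (p q : K12) => ∃ w, w ∈ G.ends p.1 ∧ w ∈ G.ends q.1) p q →
              (p.1 = ℓ ↔ q.1 = ℓ) := by
            intro p q h
            induction h with
            | rel p q hpq =>
              obtain ⟨w, hwp, hwq⟩ := hpq
              constructor
              · intro hp
                rw [hp, hℓends] at hwp
                have hw : w = v := by simpa using hwp
                rw [hw] at hwq
                rcases hv_only q.1 hwq with h | h
                · exact absurd h q.2.1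
                · exact h
              · intro hq
                rw [hq, hℓends] at hwq
                have hw : w = v := by simpa using hwq
                rw [hw] at hwp
                rcases hv_only p.1 hwp with h | h
                · exact absurd h p.2.1
                · exact h
            | refl p => exact Iff.rfl
            | symm p q _ ih => exact ih.symm
            | trans p q r _ _ ih1 ih2 => exact ih1.trans ih2
          have hevℓ : ev = ℓ := by
            rcases hv_only ev hevv with h | h
            · exact absurd h hev0
            · exact h
          have heuℓ : eu = ℓ := (hinv xu xv hEq).mpr hevℓ
          rw [heuℓ, hℓends] at heuu
          exact huv (by simpa using heuu)
        · -- no loops at u or v: two distinct edges at each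
          push_neg at hloopu hloopv
          -- the two edges at u
          have hFu : ∃ A B : E, A ≠ B ∧ A ≠ e₀ ∧ B ≠ e₀ ∧ u ∈ G.ends A ∧ u ∈ G.ends B ∧
              (∀ e, e ≠ e₀ → u ∈ G.ends e → e = A ∨ e = B) := by
            set F : Finset E := Finset.univ.filter (fun e => e ≠ e₀ ∧ u ∈ G.ends e) with hF
            have hmemF : ∀ e, e ∈ F ↔ (e ≠ e₀ ∧ u ∈ G.ends e) := by intro e; simp [hF]
            have hone : ∀ e ∈ F, endCount u (G.ends e) = 1 := by
              intro e he
              obtain ⟨he0, heu⟩ := (hmemF e).mp he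
              have h1 := one_le_endCount_of_mem heu
              have h2 := endCount_le_two u (G.ends e)
              rcases Nat.lt_or_ge (endCount u (G.ends e)) 2 with h | h
              · omega
              · have : endCount u (G.ends e) = 2 := by omega
                have hdiag := eq_diag_of_endCount_eq_two this
                exact absurd (by rw [hdiag]; exact Sym2.mk_isDiag_iff.mpr rfl)
                  (hloopu e he0 heu)
            have hsum2 : ∑ e ∈ F, endCount u (G.ends e) = 2 := by
              have hsplit : ∑ e ∈ Finset.univ.erase e₀, endCount u (G.ends e) =
                  ∑ e ∈ F, endCount u (G.ends e) := by
                symm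
                apply Finset.sum_subset
                · intro e he
                  exact Finset.mem_erase.mpr ⟨((hmemF e).mp he).1, Finset.mem_univ _⟩
                · intro e he hne
                  refine endCount_eq_zero_of_not_mem (fun hmem => hne ?_)
                  exact (hmemF e).mpr ⟨(Finset.mem_erase.mp he).1, hmem⟩
              have htot := hcubic u
              rw [degree] at htot
              have hsp2 : endCount u (G.ends e₀) +
                  ∑ e ∈ Finset.univ.erase e₀, endCount u (G.ends e) =
                  ∑ e, endCount u (G.ends e) :=
                Finset.add_sum_erase Finset.univ (fun e => endCount u (G.ends e))
                  (Finset.mem_univ e₀)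
              omega
            have hcard : F.card = 2 := by
              have := Finset.sum_congr rfl hone
              rw [this, Finset.sum_const, smul_eq_mul, Nat.mul_one] at hsum2
              exact hsum2
            obtain ⟨A, B, hAB, hFeq⟩ := Finset.card_eq_two.mp hcard
            have hA : A ∈ F := by rw [hFeq]; exact Finset.mem_insert_self _ _
            have hB : B ∈ F := by rw [hFeq]; simp
            obtain ⟨hA0, hAu⟩ := (hmemF A).mp hA
            obtain ⟨hB0, hBu⟩ := (hmemF B).mp hB
            refine ⟨A, B, hAB, hA0, hB0, hAu, hBu, fun e he0 heu => ?_⟩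
            have : e ∈ F := (hmemF e).mpr ⟨he0, heu⟩
            rw [hFeq] at this
            simpa using this
          have hFv : ∃ D₁ D₂ : E, D₁ ≠ D₂ ∧ D₁ ≠ e₀ ∧ D₂ ≠ e₀ ∧ v ∈ G.ends D₁ ∧
              v ∈ G.ends D₂ ∧ (∀ e, e ≠ e₀ → v ∈ G.ends e → e = D₁ ∨ e = D₂) := by
            set F : Finset E := Finset.univ.filter (fun e => e ≠ e₀ ∧ v ∈ G.ends e) with hF
            have hmemF : ∀ e, e ∈ F ↔ (e ≠ e₀ ∧ v ∈ G.ends e) := by intro e; simp [hF]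
            have hone : ∀ e ∈ F, endCount v (G.ends e) = 1 := by
              intro e he
              obtain ⟨he0, heu⟩ := (hmemF e).mp he
              have h1 := one_le_endCount_of_mem heu
              have h2 := endCount_le_two v (G.ends e)
              rcases Nat.lt_or_ge (endCount v (G.ends e)) 2 with h | h
              · omega
              · have : endCount v (G.ends e) = 2 := by omega
                have hdiag := eq_diag_of_endCount_eq_two this
                exact absurd (by rw [hdiag]; exact Sym2.mk_isDiag_iff.mpr rfl)
                  (hloopv e he0 heu)
            have hsum2 : ∑ e ∈ F, endCount v (G.ends e) = 2 := by
              have hsplit : ∑ e ∈ Finset.univ.erase e₀, endCount v (G.ends e) =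
                  ∑ e ∈ F, endCount v (G.ends e) := by
                symm
                apply Finset.sum_subset
                · intro e he
                  exact Finset.mem_erase.mpr ⟨((hmemF e).mp he).1, Finset.mem_univ _⟩
                · intro e he hne
                  refine endCount_eq_zero_of_not_mem (fun hmem => hne ?_)
                  exact (hmemF e).mpr ⟨(Finset.mem_erase.mp he).1, hmem⟩
              have htot := hcubic v
              rw [degree] at htot
              have hsp2 : endCount v (G.ends e₀) +
                  ∑ e ∈ Finset.univ.erase e₀, endCount v (G.ends e) =
                  ∑ e, endCount v (G.ends e) :=
                Finset.add_sum_erase Finset.univ (fun e => endCount v (G.ends e))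
                  (Finset.mem_univ e₀)
              omega
            have hcard : F.card = 2 := by
              have := Finset.sum_congr rfl hone
              rw [this, Finset.sum_const, smul_eq_mul, Nat.mul_one] at hsum2
              exact hsum2
            obtain ⟨D₁, D₂, hD, hFeq⟩ := Finset.card_eq_two.mp hcard
            have hA : D₁ ∈ F := by rw [hFeq]; exact Finset.mem_insert_self _ _
            have hB : D₂ ∈ F := by rw [hFeq]; simp
            obtain ⟨hA0, hAv⟩ := (hmemF D₁).mp hA
            obtain ⟨hB0, hBv⟩ := (hmemF D₂).mp hB
            refine ⟨D₁, D₂, hD, hA0, hB0, hAv, hBv, fun e he0 hev => ?_⟩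
            have : e ∈ F := (hmemF e).mpr ⟨he0, hev⟩
            rw [hFeq] at this
            simpa using this
          obtain ⟨A, B, hAB, hA0, hB0, hAu, hBu, hustr⟩ := hFu
          obtain ⟨D₁, D₂, hD, hD10, hD20, hD1v, hD2v, hvstr⟩ := hFv
          by_cases hconn' : ∃ p q : E, (p = A ∨ p = B) ∧ (q = D₁ ∨ q = D₂) ∧
              Relation.ReflTransGen R p q
          · obtain ⟨p, q, hp, hq, hr⟩ := hconn'
            apply huncol
            rcases hp with rfl | rfl <;> rcases hq with rfl | rfl
            · exact swap_contra G e₀ u v c hcubic hends huv hform hu_purple hv_blue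
                p B q D₂ hAB hD hA0 hB0 hD10 hD20 hAu hBu hD1v hD2v hr
            · exact swap_contra G e₀ u v c hcubic hends huv hform hu_purple hv_blue
                p B q D₁ hAB (Ne.symm hD) hA0 hB0 hD20 hD10 hAu hBu hD2v hD1v hr
            · exact swap_contra G e₀ u v c hcubic hends huv hform hu_purple hv_blue
                p A q D₂ (Ne.symm hAB) hD hB0 hA0 hD10 hD20 hBu hAu hD1v hD2v hr
            · exact swap_contra G e₀ u v c hcubic hends huv hform hu_purple hv_blue
                p A q D₁ (Ne.symm hAB) (Ne.symm hD) hB0 hA0 hD20 hD10 hBu hAu hD2v hD1v hr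
          · push_neg at hconn'
            set U : K12 → Prop := fun x =>
              Relation.ReflTransGen R A x.1 ∨ Relation.ReflTransGen R B x.1 with hU
            have hinv : ∀ p q : K12,
                Relation.EqvGen (fun (p q : K12) => ∃ w, w ∈ G.ends p.1 ∧ w ∈ G.ends q.1) p q →
                (U p ↔ U q) := by
              intro p q h
              induction h with
              | rel p q hpq =>
                obtain ⟨w, hwp, hwq⟩ := hpq
                by_cases hwu : w = u
                · subst hwu
                  have hup : U p := by
                    rcases hustr p.1 p.2.1 hwp with h | h
                    · exact Or.inl (h ▸ Relation.ReflTransGen.refl)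
                    · exact Or.inr (h ▸ Relation.ReflTransGen.refl)
                  have huq : U q := by
                    rcases hustr q.1 q.2.1 hwq with h | h
                    · exact Or.inl (h ▸ Relation.ReflTransGen.refl)
                    · exact Or.inr (h ▸ Relation.ReflTransGen.refl)
                  exact iff_of_true hup huq
                · by_cases hwv : w = v
                  · subst hwv
                    have hnp : ¬ U p := by
                      rintro (h | h)
                      · exact hconn' A p.1 (Or.inl rfl) (hvstr p.1 p.2.1 hwp) h
                      · exact hconn' B p.1 (Or.inr rfl) (hvstr p.1 p.2.1 hwp) h
                    have hnq : ¬ U q := by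
                      rintro (h | h)
                      · exact hconn' A q.1 (Or.inl rfl) (hvstr q.1 q.2.1 hwq) h
                      · exact hconn' B q.1 (Or.inr rfl) (hvstr q.1 q.2.1 hwq) h
                    exact iff_of_false hnp hnq
                  · have hstep : R p.1 q.1 := ⟨p.2, q.2, w, hwu, hwv, hwp, hwq⟩
                    have hstep' : R q.1 p.1 := ⟨q.2, p.2, w, hwu, hwv, hwq, hwp⟩
                    constructor
                    · rintro (h | h)
                      · exact Or.inl (h.tail hstep)
                      · exact Or.inr (h.tail hstep)
                    · rintro (h | h)
                      · exact Or.inl (h.tail hstep')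
                      · exact Or.inr (h.tail hstep')
              | refl p => exact Iff.rfl
              | symm p q _ ih => exact ih.symm
              | trans p q r _ _ ih1 ih2 => exact ih1.trans ih2
            have hUxu : U xu := by
              rcases hustr eu heu0 heuu with h | h
              · exact Or.inl (h ▸ Relation.ReflTransGen.refl)
              · exact Or.inr (h ▸ Relation.ReflTransGen.refl)
            have hUxv : U xv := (hinv xu xv hEq).mp hUxu
            rcases hUxv with h | h
            · exact hconn' A ev (Or.inl rfl) (hvstr ev hev0 hevv) h
            · exact hconn' B ev (Or.inr rfl) (hvstr ev hev0 hevv) h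
    · -- the two classes cover everything
      rw [Set.eq_univ_iff_forall]
      intro z
      refine Quotient.inductionOn z (fun z => ?_)
      obtain ⟨y, hry, hmy⟩ := hprime 1 2 (by decide) z
      have hry' : Relation.EqvGen
          (fun (p q : K12) => ∃ w, w ∈ G.ends p.1 ∧ w ∈ G.ends q.1) z y := hry
      rcases hmy with h | h
      · left
        exact Quotient.sound (Relation.EqvGen.trans _ _ _ hry'
          (Relation.EqvGen.rel _ _ ⟨u, h, heuu⟩))
      · right
        exact Quotient.sound (Relation.EqvGen.trans _ _ _ hry'
          (Relation.EqvGen.rel _ _ ⟨v, h, hevv⟩))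

  · -- red-blue circuits: exactly one, through v
    apply Nat.card_eq_one_iff_unique.mpr
    constructor
    · constructor
      intro x y
      refine Quotient.inductionOn₂ x y (fun x y => ?_)
      obtain ⟨yx, hrx, hmx⟩ := hprime 0 1 (by decide) x
      obtain ⟨yy, hry, hmy⟩ := hprime 0 1 (by decide) y
      have hmxv : v ∈ G.ends yx.1 := by
        rcases hmx with h | h
        · rcases yx.2.2 with hc' | hc' <;>
            (rw [hu_purple yx.1 yx.2.1 h] at hc'; exact absurd hc' (by decide))
        · exact h
      have hmyv : v ∈ G.ends yy.1 := by
        rcases hmy with h | h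
        · rcases yy.2.2 with hc' | hc' <;>
            (rw [hu_purple yy.1 yy.2.1 h] at hc'; exact absurd hc' (by decide))
        · exact h
      have hrx' : Relation.EqvGen
          (fun (p q : {e : E // e ≠ e₀ ∧ (c e = 0 ∨ c e = 1)}) =>
            ∃ w, w ∈ G.ends p.1 ∧ w ∈ G.ends q.1) x yx := hrx
      have hry' : Relation.EqvGen
          (fun (p q : {e : E // e ≠ e₀ ∧ (c e = 0 ∨ c e = 1)}) =>
            ∃ w, w ∈ G.ends p.1 ∧ w ∈ G.ends q.1) y yy := hry
      exact Quotient.sound (Relation.EqvGen.trans _ _ _ hrx'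
        (Relation.EqvGen.trans _ _ _ (Relation.EqvGen.rel _ _ ⟨v, hmxv, hmyv⟩)
          (Relation.EqvGen.symm _ _ hry')))
    · exact ⟨⟦⟨ev, hev0, Or.inr hcev⟩⟧⟩
end

section
/- In any proper edge 3-coloring of a planar cubic graph G, regarded as a formation, the product over all vertices of i·ε applied to the cyclic color order at the vertex equals (−√(-1)·√(-1)) raised to the number of bounces times (−1) raised to the number of crossings, which equals (+1)^{bounces}·(−1)^{crossings}; and the number of crossings among the curves of a planar formation is always even, so the total product is +1. -/
namespace FourColor

/-- The rotation permutation on darts: at every vertex the three darts are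
cyclically permuted, the cyclic order coming from the embedding. -/
def rotD (V : Type) : Equiv.Perm (V × Fin 3) :=
  Equiv.prodCongr (Equiv.refl V) (finRotate 3)

/-- A cubic graph with an embedding (rotation system) given as a combinatorial
map: darts are pairs (vertex, position in the cyclic order at that vertex),
and the fixed-point-free involution `α` pairs the two darts of each edge. -/
structure CubicMap (V : Type) where
  α : Equiv.Perm (V × Fin 3)
  invol : ∀ d, α (α d) = d
  fixfree : ∀ d, α d ≠ d

namespace CubicMap

variable {V : Type}

/-- The face permutation of the combinatorial map. -/
def facePerm (M : CubicMap V) : Equiv.Perm (V × Fin 3) := rotD V * M.α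

/-- Darts on a common face. -/
def faceSetoid (M : CubicMap V) : Setoid (V × Fin 3) :=
  ⟨M.facePerm.SameCycle, Equiv.Perm.SameCycle.equivalence M.facePerm⟩

/-- The number of faces of the embedding. -/
noncomputable def nfaces (M : CubicMap V) : ℕ := Nat.card (Quotient M.faceSetoid)

/-- Connectivity of the map. -/
def ConnectedMap (M : CubicMap V) : Prop :=
  ∀ d d' : V × Fin 3, Relation.ReflTransGen (fun x y => y = M.α x ∨ y = rotD V x) d d'

/-- The map is an embedding in the plane (sphere): it is connected and
satisfies Euler's formula `V - E + F = 2`, where `E = 3|V|/2`; equivalently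
`2F = 4 + |V|`. -/
def PlanarMap [Fintype V] (M : CubicMap V) : Prop :=
  M.ConnectedMap ∧ 2 * M.nfaces = 4 + Fintype.card V

/-- A labeling of the darts by colors `{0,1,2}` constant on edges, i.e. a
function from edges to colors. -/
def EdgeLabeling (M : CubicMap V) (f : V × Fin 3 → Fin 3) : Prop :=
  ∀ d, f (M.α d) = f d

/-- A proper edge 3-coloring: an edge labeling with three distinct colors at
each vertex. -/
def ProperMap (M : CubicMap V) (f : V × Fin 3 → Fin 3) : Prop :=
  M.EdgeLabeling f ∧ ∀ v : V, Function.Injective fun i : Fin 3 => f (v, i)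

end CubicMap

/-- The alternating (epsilon) tensor on three indices: the sign of the cyclic
word `i j k`. -/
def eps (i j k : Fin 3) : ℤ :=
  if i = j ∨ j = k ∨ i = k then 0 else if j = i + 1 then 1 else -1

open CubicMap in
/-- The Penrose summation: the sum over all edge colorings (by `{0,1,2}`) of
the product over vertices of `√-1 · ε` applied to the colors of the three
incident edges in the cyclic order at that vertex. -/
noncomputable def penroseSum {V : Type} [Fintype V] (M : CubicMap V) : ℂ :=
  letI := Classical.decEq V
  letI := Classical.decPred (M.EdgeLabeling)
  ∑ f : {f : V × Fin 3 → Fin 3 // M.EdgeLabeling f},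
    ∏ v : V, (Complex.I * ((eps (f.1 (v, 0)) (f.1 (v, 1)) (f.1 (v, 2)) : ℤ) : ℂ))

end FourColor

open FourColor CubicMap

namespace FourColor

/-- The sign `ε` of a vertex in a properly colored cubic map. -/
def vsign {V : Type} (f : V × Fin 3 → Fin 3) (v : V) : ℤ :=
  eps (f (v, 0)) (f (v, 1)) (f (v, 2))

open CubicMap in
/-- The number of crossings of the formation of a proper coloring `f` (purple
= color `2`): purple edges whose two endpoint vertices carry equal signs. -/
def ncross {V : Type} [Fintype V] (M : CubicMap V) (f : V × Fin 3 → Fin 3) : ℕ :=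
  (Finset.univ.filter fun d : V × Fin 3 =>
      f d = 2 ∧ vsign f d.1 = vsign f (M.α d).1).card / 2

open CubicMap in
/-- The number of bounces: purple edges whose two endpoint vertices carry
opposite signs. -/
def nbounce {V : Type} [Fintype V] (M : CubicMap V) (f : V × Fin 3 → Fin 3) : ℕ :=
  (Finset.univ.filter fun d : V × Fin 3 =>
      f d = 2 ∧ vsign f d.1 ≠ vsign f (M.α d).1).card / 2

end FourColor

/-!
Let `n` be the number of vertices, `n₋` the number of vertices with `ε = -1`, and `c`, `b` the
numbers of crossings and bounces. The purple edges form a perfect matching, so `n = 2 (c + b)`,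
and a purple edge has exactly one negative endpoint iff it is a bounce, so `n₋ ≡ b (mod 2)`.
Hence the product is `i ^ n * (-1) ^ n₋ = (-1) ^ (c + b + n₋) = (-1) ^ c`.

That `c` is even is the Jordan curve theorem in mod 2 form. By Euler's formula a dimension count
shows that every mod 2 cycle of the map is the boundary of a set of faces; in particular the red
curve (colours `0` and `2`) is, so there is a face 2-colouring `ψ` that changes exactly across red
and purple edges. At a vertex, the faces just before the red and the blue edge in the rotation lie
on the same side of the red curve iff the vertex is negative. Summing over vertices,
`n + n₋ ≡ ∑_{red darts} ψ + ∑_{blue darts} ψ ≡ #(red edges) + 0 = c + b`, hence `c ≡ n₋ + b ≡ 0`.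
-/

open Finset Module

section Involution

variable {X : Type*} {α : X → X} {S : Finset X}

theorem Finset.sum_eq_sum_filter_lt_add [LinearOrder X] {M : Type*} [AddCommMonoid M]
    (hα : Function.Involutive α) (hS : ∀ x ∈ S, α x ∈ S) (hfix : ∀ x ∈ S, α x ≠ x)
    (g : X → M) :
    ∑ x ∈ S, g x = ∑ x ∈ S with x < α x, (g x + g (α x)) := by
  rw [← sum_filter_add_sum_filter_not S (fun x => x < α x), sum_add_distrib]
  congr 1
  refine sum_nbij' α α ?_ ?_ (fun x _ => hα x) (fun x _ => hα x) (fun x _ => by rw [hα])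
  · intro x hx
    simp only [mem_filter, not_lt] at hx ⊢
    exact ⟨hS x hx.1, by rw [hα]; exact lt_of_le_of_ne hx.2 (hfix x hx.1)⟩
  · intro x hx
    simp only [mem_filter, not_lt] at hx ⊢
    exact ⟨hS x hx.1, by rw [hα]; exact hx.2.le⟩

theorem Finset.card_eq_two_mul_card_filter_lt [LinearOrder X]
    (hα : Function.Involutive α) (hS : ∀ x ∈ S, α x ∈ S) (hfix : ∀ x ∈ S, α x ≠ x) :
    S.card = 2 * #{x ∈ S | x < α x} := by
  rw [card_eq_sum_ones, sum_eq_sum_filter_lt_add hα hS hfix, card_eq_sum_ones, mul_sum, mul_one]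

theorem Finset.even_card_of_involution (hα : Function.Involutive α) (hS : ∀ x ∈ S, α x ∈ S)
    (hfix : ∀ x ∈ S, α x ≠ x) : Even S.card := by
  let := WellOrderingRel.isWellOrder.linearOrder (α := X)
  exact ⟨_, (card_eq_two_mul_card_filter_lt hα hS hfix).trans (two_mul _)⟩

theorem Finset.sum_eq_card_div_two_smul_of_involution {R : Type*} [Ring R] [CharP R 2]
    (hα : Function.Involutive α) (hS : ∀ x ∈ S, α x ∈ S) (hfix : ∀ x ∈ S, α x ≠ x)
    {g : X → R} {t : R} (hg : ∀ x ∈ S, g (α x) = g x + t) :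
    ∑ x ∈ S, g x = (S.card / 2) • t := by
  let := WellOrderingRel.isWellOrder.linearOrder (α := X)
  rw [sum_eq_sum_filter_lt_add hα hS hfix, card_eq_two_mul_card_filter_lt hα hS hfix,
    Nat.mul_div_cancel_left _ two_pos, ← sum_const]
  exact sum_congr rfl fun x hx => by rw [hg x (mem_filter.mp hx).1, CharTwo.add_cancel_left]

end Involution

theorem Submodule.finrank_map_add_finrank_inf_ker {K V W : Type*} [Field K] [AddCommGroup V]
    [Module K V] [AddCommGroup W] [Module K W] [FiniteDimensional K V]
    (p : Submodule K V) (f : V →ₗ[K] W) :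
    finrank K (p.map f) + finrank K ↥(p ⊓ LinearMap.ker f) = finrank K p := by
  have h := LinearMap.finrank_range_add_finrank_ker (f.domRestrict p)
  rwa [LinearMap.range_domRestrict, LinearMap.ker_domRestrict, ← Submodule.finrank_map_subtype_eq,
    Submodule.map_comap_subtype] at h

section Invariants

variable (K : Type*) [Field K] {X : Type*} [Fintype X]

def invariantFunctions (π : Equiv.Perm X) : Submodule K (X → K) where
  carrier := {g | ∀ x, g (π x) = g x}
  add_mem' ha hb x := by simp [ha x, hb x]
  zero_mem' _ := rfl
  smul_mem' c g hg x := by simp [hg x]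

theorem card_quotient_sameCycle_le_finrank_invariantFunctions (π : Equiv.Perm X) :
    Nat.card (Quotient (Equiv.Perm.SameCycle.setoid π)) ≤ finrank K (invariantFunctions K π) := by
  let s := Equiv.Perm.SameCycle.setoid π
  have : Fintype (Quotient s) := Fintype.ofFinite _
  let L := (LinearMap.funLeft K K (Quotient.mk s)).codRestrict (invariantFunctions K π)
    fun h x => congrArg h (Quotient.sound (Equiv.Perm.sameCycle_apply_left.mpr .rfl))
  have hL : Function.Injective L := fun a b hab =>
    LinearMap.funLeft_injective_of_surjective _ _ _ Quotient.mk_surjective (congrArg Subtype.val hab)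
  simpa [Nat.card_eq_fintype_card] using LinearMap.finrank_le_finrank_of_injective hL

theorem finrank_invariantFunctions_le_card_filter_lt [LinearOrder X] {α : Equiv.Perm X}
    (hα : Function.Involutive α) (hfix : ∀ x, α x ≠ x) :
    finrank K (invariantFunctions K α) ≤ #{x | x < α x} := by
  let L := (LinearMap.funLeft K K (Subtype.val : {x // x < α x} → X)).comp
    (invariantFunctions K α).subtype
  have hL : Function.Injective L := by
    rw [← LinearMap.ker_eq_bot, LinearMap.ker_eq_bot']
    rintro ⟨g, hg⟩ hg0
    ext x
    change g x = 0
    rcases lt_or_gt_of_ne (hfix x).symm with hx | hx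
    · exact congrFun hg0 ⟨x, hx⟩
    · rw [← hg x]
      exact congrFun hg0 ⟨α x, by rwa [hα]⟩
  simpa [Fintype.card_subtype] using LinearMap.finrank_le_finrank_of_injective hL

end Invariants

namespace FourColor.CubicMap

variable {V : Type} (M : CubicMap V)

theorem involutive_α : Function.Involutive M.α := M.invol

theorem rotD_apply (v : V) (i : Fin 3) : rotD V (v, i) = (v, i + 1) := by
  simp [rotD, finRotate_apply]

theorem facePerm_α (d : V × Fin 3) : M.facePerm (M.α d) = rotD V d := by
  simp [facePerm, M.invol]

theorem ConnectedMap.induction {M : CubicMap V} (hM : M.ConnectedMap) {p : V × Fin 3 → Prop}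
    {d₀ : V × Fin 3} (h₀ : p d₀) (hα : ∀ d, p d → p (M.α d)) (hrot : ∀ d, p d → p (rotD V d))
    (d : V × Fin 3) : p d := by
  induction hM d₀ d with
  | refl => exact h₀
  | tail _ step ih => rcases step with rfl | rfl; exacts [hα _ ih, hrot _ ih]

/- Functions on darts invariant under `facePerm` are functions on faces, those invariant under `α`
are functions on edges. `coboundary` sends a face set to the edges separating it from its
complement, `boundary` sends an edge set to the parities of the vertex degrees. -/
def coboundary : (V × Fin 3 → ZMod 2) →ₗ[ZMod 2] (V × Fin 3 → ZMod 2) :=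
  LinearMap.id + LinearMap.funLeft (ZMod 2) (ZMod 2) M.α

theorem coboundary_apply (ψ : V × Fin 3 → ZMod 2) (d : V × Fin 3) :
    M.coboundary ψ d = ψ d + ψ (M.α d) := rfl

variable (V) in
def boundary [Fintype V] : (V × Fin 3 → ZMod 2) →ₗ[ZMod 2] (V → ZMod 2) where
  toFun g v := ∑ i, g (v, i)
  map_add' g h := by ext v; simp [sum_add_distrib]
  map_smul' c g := by ext v; simp [mul_sum]

def cycles [Fintype V] : Submodule (ZMod 2) (V × Fin 3 → ZMod 2) :=
  invariantFunctions (ZMod 2) M.α ⊓ LinearMap.ker (boundary V)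

theorem single_add_single_α_mem_invariantFunctions [DecidableEq V] (d : V × Fin 3) :
    Pi.single d 1 + Pi.single (M.α d) 1 ∈ invariantFunctions (ZMod 2) M.α := fun x => by
  simp only [Pi.add_apply, Pi.single_apply, M.involutive_α.eq_iff, M.invol]
  exact add_comm (G := ZMod 2) _ _

variable {M}

theorem finrank_inf_ker_coboundary_le_one (hM : M.ConnectedMap) :
    finrank (ZMod 2) ↥(invariantFunctions (ZMod 2) M.facePerm ⊓ LinearMap.ker M.coboundary) ≤ 1 := by
  have hconst : invariantFunctions (ZMod 2) M.facePerm ⊓ LinearMap.ker M.coboundary ≤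
      Submodule.span (ZMod 2) {fun _ => 1} := by
    rintro ψ ⟨hφ, hδ⟩
    rw [Submodule.mem_span_singleton]
    obtain _ | ⟨⟨d₀⟩⟩ := isEmpty_or_nonempty (V × Fin 3)
    · exact ⟨0, funext isEmptyElim⟩
    have hα (d) : ψ (M.α d) = ψ d := (CharTwo.add_eq_zero.mp (congrFun hδ d)).symm
    have hψ : ∀ d, ψ d = ψ d₀ := hM.induction rfl (fun d h => by rw [hα, h])
      (fun d h => by rw [← facePerm_α, hφ, hα, h])
    exact ⟨ψ d₀, funext fun d => by simp [hψ d]⟩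
  calc _ ≤ finrank (ZMod 2) (Submodule.span (ZMod 2) {fun _ : V × Fin 3 => (1 : ZMod 2)}) :=
        Submodule.finrank_mono hconst
    _ ≤ 1 := by simpa using finrank_span_le_card ({fun _ => 1} : Set (V × Fin 3 → ZMod 2))

variable [Fintype V]

theorem map_coboundary_le_cycles :
    (invariantFunctions (ZMod 2) M.facePerm).map M.coboundary ≤ M.cycles := by
  rintro _ ⟨ψ, hψ, rfl⟩
  refine ⟨fun d => by simp only [coboundary_apply, M.invol, add_comm], ?_⟩
  ext v
  have hrot : ∀ i, ψ (M.α (v, i)) = ψ (v, i + 1) := fun i => by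
    rw [← hψ, facePerm_α, rotD_apply]
  simp only [boundary, LinearMap.coe_mk, AddHom.coe_mk, coboundary_apply, hrot,
    sum_add_distrib, Pi.zero_apply]
  rw [show ∑ i, ψ (v, i + 1) = ∑ i, ψ (v, i) from
      Equiv.sum_comp (Equiv.addRight 1) (ψ ⟨v, ·⟩),
    CharTwo.add_self_eq_zero]

theorem boundary_single [DecidableEq V] (d : V × Fin 3) :
    boundary V (Pi.single d 1) = Pi.single d.1 1 := by
  ext v
  simp only [boundary, LinearMap.coe_mk, AddHom.coe_mk, Pi.single_apply, Prod.ext_iff]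
  by_cases hv : v = d.1 <;> simp [hv]

theorem card_le_finrank_map_boundary_add_one (hM : M.ConnectedMap) :
    Fintype.card V ≤ finrank (ZMod 2) ((invariantFunctions (ZMod 2) M.α).map (boundary V)) + 1 := by
  classical
  obtain _ | ⟨⟨u₀⟩⟩ := isEmpty_or_nonempty V
  · simp
  set T := (invariantFunctions (ZMod 2) M.α).map (boundary V)
  let e (u : V) : V → ZMod 2 := Pi.single u 1
  have hchar (x : V → ZMod 2) : x + x = 0 := funext fun _ => CharTwo.add_self_eq_zero _
  have hpath : ∀ d : V × Fin 3, e d.1 + e u₀ ∈ T := by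
    refine hM.induction (d₀ := (u₀, 0)) (by rw [hchar]; exact T.zero_mem) (fun d hd => ?_)
      (fun d hd => by rwa [show (rotD V d).1 = d.1 from rfl])
    have hedge : e d.1 + e (M.α d).1 ∈ T :=
      ⟨_, M.single_add_single_α_mem_invariantFunctions d, by simp [e, boundary_single]⟩
    simpa only [add_add_add_comm, hchar, zero_add] using T.add_mem hedge hd
  have htop : ⊤ ≤ T ⊔ Submodule.span (ZMod 2) {e u₀} := by
    intro h _
    have hdecomp : h = ∑ u, h u • (e u + e u₀) + (∑ u, h u) • e u₀ := by
      rw [sum_congr rfl fun u _ => smul_add (h u) (e u) (e u₀), sum_add_distrib, sum_smul,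
        add_assoc, hchar, add_zero]
      exact pi_eq_sum_univ' h
    rw [hdecomp]
    exact Submodule.add_mem_sup (T.sum_mem fun u _ => T.smul_mem _ (hpath (u, 0)))
      (Submodule.smul_mem _ _ (Submodule.mem_span_singleton_self _))
  calc Fintype.card V = finrank (ZMod 2) (⊤ : Submodule (ZMod 2) (V → ZMod 2)) := by simp
    _ ≤ finrank (ZMod 2) ↥(T ⊔ Submodule.span (ZMod 2) {e u₀}) := Submodule.finrank_mono htop
    _ ≤ finrank (ZMod 2) T + finrank (ZMod 2) (Submodule.span (ZMod 2) {e u₀}) :=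
      Submodule.finrank_add_le_finrank_add_finrank _ _
    _ ≤ finrank (ZMod 2) T + 1 := by
      gcongr; simpa using finrank_span_le_card ({e u₀} : Set (V → ZMod 2))

theorem map_coboundary_eq_cycles (hM : M.PlanarMap) :
    (invariantFunctions (ZMod 2) M.facePerm).map M.coboundary = M.cycles := by
  let : LinearOrder (V × Fin 3) := WellOrderingRel.isWellOrder.linearOrder
  refine Submodule.eq_of_le_of_finrank_le map_coboundary_le_cycles ?_
  -- With `F` faces, `E` edges and `n` vertices: the image has dimension at least `F - 1` and the
  -- cycle space at most `E - n + 1`; these agree since `2F = 4 + n` and `2E = 3n`.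
  have hfaces : M.nfaces ≤ finrank (ZMod 2) (invariantFunctions (ZMod 2) M.facePerm) :=
    card_quotient_sameCycle_le_finrank_invariantFunctions _ M.facePerm
  have hedges : finrank (ZMod 2) (invariantFunctions (ZMod 2) M.α) ≤ #{d | d < M.α d} :=
    finrank_invariantFunctions_le_card_filter_lt _ M.involutive_α M.fixfree
  have hdarts := card_eq_two_mul_card_filter_lt M.involutive_α
    (fun d _ => mem_univ (M.α d)) (fun d _ => M.fixfree d)
  rw [card_univ, Fintype.card_prod, Fintype.card_fin] at hdarts
  have hδ := Submodule.finrank_map_add_finrank_inf_ker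
    (invariantFunctions (ZMod 2) M.facePerm) M.coboundary
  have hδker := finrank_inf_ker_coboundary_le_one hM.1
  have hbdry := Submodule.finrank_map_add_finrank_inf_ker
    (invariantFunctions (ZMod 2) M.α) (boundary V)
  have hbdryim := card_le_finrank_map_boundary_add_one hM.1
  have heuler := hM.2
  unfold cycles
  omega

theorem exists_potential (hM : M.PlanarMap) {r : V × Fin 3 → ZMod 2} (hr : r ∈ M.cycles) :
    ∃ ψ : V × Fin 3 → ZMod 2, (∀ d, ψ (M.facePerm d) = ψ d) ∧ ∀ d, ψ (M.α d) = ψ d + r d := by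
  rw [← map_coboundary_eq_cycles hM] at hr
  obtain ⟨ψ, hψ, rfl⟩ := hr
  exact ⟨ψ, hψ, fun d => by rw [coboundary_apply, CharTwo.add_cancel_left]⟩

end FourColor.CubicMap

namespace FourColor

theorem eps_perm_eq_one_or_neg_one (σ : Equiv.Perm (Fin 3)) :
    eps (σ 0) (σ 1) (σ 2) = 1 ∨ eps (σ 0) (σ 1) (σ 2) = -1 := by
  revert σ; decide

/- `σ` lists the colours of the darts at a vertex in rotation order and `a` is a potential of the
red curve, `a i` being attached to the face just before dart `i`. -/
theorem potential_red_add_blue_eq (σ : Equiv.Perm (Fin 3)) (a : Fin 3 → ZMod 2)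
    (ha : ∀ i, a (i + 1) = a i + if σ i = 1 then 0 else 1) :
    a (σ.symm 0) + a (σ.symm 1) = 1 + if eps (σ 0) (σ 1) (σ 2) = -1 then 1 else 0 := by
  revert σ a; decide

variable {V : Type} {M : CubicMap V} {f : V × Fin 3 → Fin 3}

noncomputable def colorAt (hf : M.ProperMap f) (v : V) : Equiv.Perm (Fin 3) :=
  Equiv.ofBijective (fun i => f (v, i)) (Finite.injective_iff_bijective.mp (hf.2 v))

theorem colorAt_apply (hf : M.ProperMap f) (v : V) (i : Fin 3) : colorAt hf v i = f (v, i) := rfl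

theorem vsign_eq_one_or_neg_one (hf : M.ProperMap f) (v : V) : vsign f v = 1 ∨ vsign f v = -1 :=
  eps_perm_eq_one_or_neg_one (colorAt hf v)

variable [Fintype V]

theorem sum_filter_color_eq {R : Type*} [AddCommMonoid R] (hf : M.ProperMap f) (c : Fin 3)
    (g : V × Fin 3 → R) : ∑ d with f d = c, g d = ∑ v, g (v, (colorAt hf v).symm c) := by
  rw [sum_filter, Fintype.sum_prod_type]
  refine sum_congr rfl fun v _ => ?_
  simp_rw [← colorAt_apply hf, ← Equiv.eq_symm_apply]
  simp

theorem card_filter_color_eq (hf : M.ProperMap f) (c : Fin 3) :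
    #{d | f d = c} = Fintype.card V := by
  rw [card_eq_sum_ones, sum_filter_color_eq hf c, sum_const, card_univ, smul_eq_mul, mul_one]

variable (M f) in
def crossingDarts : Finset (V × Fin 3) :=
  {d | f d = 2 ∧ vsign f d.1 = vsign f (M.α d).1}

variable (M f) in
def bounceDarts : Finset (V × Fin 3) :=
  {d | f d = 2 ∧ vsign f d.1 ≠ vsign f (M.α d).1}

theorem α_mem_crossingDarts (hf : M.ProperMap f) {d : V × Fin 3} (hd : d ∈ crossingDarts M f) :
    M.α d ∈ crossingDarts M f := by
  simp only [crossingDarts, mem_filter, mem_univ, true_and, hf.1 d, M.invol] at hd ⊢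
  exact ⟨hd.1, hd.2.symm⟩

theorem α_mem_bounceDarts (hf : M.ProperMap f) {d : V × Fin 3} (hd : d ∈ bounceDarts M f) :
    M.α d ∈ bounceDarts M f := by
  simp only [bounceDarts, mem_filter, mem_univ, true_and, hf.1 d, M.invol] at hd ⊢
  exact ⟨hd.1, hd.2.symm⟩

theorem two_mul_ncross (hf : M.ProperMap f) : 2 * ncross M f = (crossingDarts M f).card :=
  Nat.two_mul_div_two_of_even <| even_card_of_involution M.involutive_α
    (fun _ => α_mem_crossingDarts hf) (fun d _ => M.fixfree d)

theorem two_mul_nbounce (hf : M.ProperMap f) : 2 * nbounce M f = (bounceDarts M f).card :=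
  Nat.two_mul_div_two_of_even <| even_card_of_involution M.involutive_α
    (fun _ => α_mem_bounceDarts hf) (fun d _ => M.fixfree d)

theorem sum_purple_eq_sum_crossingDarts_add_sum_bounceDarts {R : Type*} [AddCommMonoid R]
    (g : V × Fin 3 → R) :
    ∑ d with f d = 2, g d = ∑ d ∈ crossingDarts M f, g d + ∑ d ∈ bounceDarts M f, g d := by
  rw [← sum_filter_add_sum_filter_not _ fun d => vsign f d.1 = vsign f (M.α d).1, filter_filter,
    filter_filter]
  rfl

theorem card_eq_two_mul_ncross_add_nbounce (hf : M.ProperMap f) :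
    Fintype.card V = 2 * (ncross M f + nbounce M f) := by
  rw [mul_add, two_mul_ncross hf, two_mul_nbounce hf, ← card_filter_color_eq hf 2]
  simpa only [card_eq_sum_ones] using
    sum_purple_eq_sum_crossingDarts_add_sum_bounceDarts (M := M) fun _ => 1

theorem card_vsign_neg_eq_nbounce (hf : M.ProperMap f) :
    (#{v | vsign f v = -1} : ZMod 2) = nbounce M f := by
  let g (d : V × Fin 3) : ZMod 2 := if vsign f d.1 = -1 then 1 else 0
  have hbounce : ∑ d ∈ bounceDarts M f, g d = nbounce M f := by
    rw [sum_eq_card_div_two_smul_of_involution M.involutive_α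
      (fun _ => α_mem_bounceDarts hf) (fun d _ => M.fixfree d) (t := 1), nsmul_one]
    · rfl
    intro d hd
    simp only [bounceDarts, mem_filter] at hd
    rcases vsign_eq_one_or_neg_one hf d.1 with h | h <;>
      rcases vsign_eq_one_or_neg_one hf (M.α d).1 with h' | h' <;>
      simp_all [g, CharTwo.add_self_eq_zero]
  have hcross : ∑ d ∈ crossingDarts M f, g d = 0 := by
    rw [sum_eq_card_div_two_smul_of_involution M.involutive_α
      (fun _ => α_mem_crossingDarts hf) (fun d _ => M.fixfree d) (t := 0), smul_zero]
    intro d hd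
    simp only [crossingDarts, mem_filter] at hd
    simp [g, hd.2.2]
  rw [← sum_boole, ← sum_filter_color_eq hf 2 g, sum_purple_eq_sum_crossingDarts_add_sum_bounceDarts,
    hcross, hbounce, zero_add]

theorem exists_red_potential (hM : M.PlanarMap) (hf : M.ProperMap f) :
    ∃ ψ : V × Fin 3 → ZMod 2, (∀ d, ψ (M.facePerm d) = ψ d) ∧
      ∀ d, ψ (M.α d) = ψ d + if f d = 1 then 0 else 1 := by
  refine M.exists_potential hM ⟨fun d => by simp only [hf.1 d], ?_⟩
  ext v
  change ∑ i, (if f (v, i) = 1 then (0 : ZMod 2) else 1) = 0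
  exact (Equiv.sum_comp (colorAt hf v) fun c => if c = 1 then (0 : ZMod 2) else 1).trans (by decide)

theorem card_vsign_neg_eq_ncross_add_nbounce (hM : M.PlanarMap) (hf : M.ProperMap f) :
    (#{v | vsign f v = -1} : ZMod 2) = ncross M f + nbounce M f := by
  obtain ⟨ψ, hφ, hα⟩ := exists_red_potential hM hf
  have hrot (v : V) (i : Fin 3) : ψ (v, i + 1) = ψ (v, i) + if f (v, i) = 1 then 0 else 1 := by
    rw [← hα, ← CubicMap.rotD_apply, ← CubicMap.facePerm_α, hφ]
  have hred : ∑ d with f d = 0, ψ d = ncross M f + nbounce M f := by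
    rw [sum_eq_card_div_two_smul_of_involution M.involutive_α (t := 1)
      (fun d hd => by simpa [hf.1 d] using hd) (fun d _ => M.fixfree d)
      (fun d hd => by simp [hα, (mem_filter.mp hd).2]),
      card_filter_color_eq hf 0, card_eq_two_mul_ncross_add_nbounce hf]
    simp
  have hblue : ∑ d with f d = 1, ψ d = 0 := by
    rw [sum_eq_card_div_two_smul_of_involution M.involutive_α (t := 0)
      (fun d hd => by simpa [hf.1 d] using hd) (fun d _ => M.fixfree d)
      (fun d hd => by simp [hα, (mem_filter.mp hd).2]), smul_zero]
  have hcard : (Fintype.card V : ZMod 2) = 0 := by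
    rw [ZMod.natCast_eq_zero_iff_even, card_eq_two_mul_ncross_add_nbounce hf]
    exact even_two_mul _
  calc (#{v | vsign f v = -1} : ZMod 2)
      = ∑ v, (1 + if vsign f v = -1 then 1 else 0) := by
        rw [sum_add_distrib, sum_boole, sum_const, card_univ, nsmul_one, hcard, zero_add]
    _ = ∑ v, (ψ (v, (colorAt hf v).symm 0) + ψ (v, (colorAt hf v).symm 1)) :=
        sum_congr rfl fun v _ =>
          (potential_red_add_blue_eq (colorAt hf v) (fun i => ψ (v, i)) (hrot v)).symm
    _ = ncross M f + nbounce M f := by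
        rw [sum_add_distrib, ← sum_filter_color_eq hf, ← sum_filter_color_eq hf, hred, hblue,
          add_zero]

theorem even_ncross (hM : M.PlanarMap) (hf : M.ProperMap f) : Even (ncross M f) := by
  have h := (card_vsign_neg_eq_nbounce hf).symm.trans (card_vsign_neg_eq_ncross_add_nbounce hM hf)
  rwa [eq_comm, add_eq_right, ZMod.natCast_eq_zero_iff_even] at h

theorem prod_vsign_eq_neg_one_pow (hf : M.ProperMap f) :
    ∏ v, (vsign f v : ℂ) = (-1) ^ #{v | vsign f v = -1} := by
  rw [card_filter, ← prod_pow_eq_pow_sum]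
  refine prod_congr rfl fun v _ => ?_
  rcases vsign_eq_one_or_neg_one hf v with h | h <;> simp [h]

theorem prod_I_mul_vsign_eq_neg_one_pow_ncross (hf : M.ProperMap f) :
    ∏ v, (Complex.I * (vsign f v : ℂ)) = (-1) ^ ncross M f := by
  have hpair : Even (nbounce M f + #{v | vsign f v = -1}) := by
    rw [← ZMod.natCast_eq_zero_iff_even, Nat.cast_add, card_vsign_neg_eq_nbounce hf,
      CharTwo.add_self_eq_zero]
  rw [prod_mul_distrib, prod_const, card_univ, prod_vsign_eq_neg_one_pow hf,
    card_eq_two_mul_ncross_add_nbounce hf, pow_mul, Complex.I_sq, ← pow_add, add_assoc,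
    pow_add, hpair.neg_one_pow, mul_one]

end FourColor

/-- for a proper edge 3-coloring of a planar cubic graph,
regarded as a formation, the product over the vertices of `√-1 · ε` of the
cyclic color order equals `(+1)^bounces · (−1)^crossings`; the number of
crossings among the curves of a planar formation is even, so the product is `+1`. -/
theorem stmt16 {V : Type} [Fintype V] (M : CubicMap V) (hplanar : M.PlanarMap)
    (f : V × Fin 3 → Fin 3) (hf : M.ProperMap f) :
    (∏ v : V, (Complex.I * ((vsign f v : ℤ) : ℂ)))
        = (1 : ℂ) ^ (nbounce M f) * (-1 : ℂ) ^ (ncross M f) ∧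
    Even (ncross M f) ∧
    (∏ v : V, (Complex.I * ((vsign f v : ℤ) : ℂ))) = 1 := by
  have hprod := prod_I_mul_vsign_eq_neg_one_pow_ncross hf
  have heven := even_ncross hplanar hf
  exact ⟨by rw [hprod, one_pow, one_mul], heven, by rw [hprod, heven.neg_one_pow]⟩
end

section
/- Let L and R be two bracketings (associations) of a product of the same ordered list of n variables in the vector cross product algebra on R^3. If there is an assignment of values from {i, j, k} to the variables such that both fully parenthesized products L and R are nonzero, then L = R under that assignment. -/
/-!
The pure quaternions `v ↦ v₀ i + v₁ j + v₂ k` satisfy `u v = -(u ⬝ v) + u × v`. For multiples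
of basis vectors, a nonzero cross product forces `u ⬝ v = 0`, so along any bracketing with
nonzero value every cross product is a quaternion product. Hence the value of the bracketing,
read as a quaternion, is the ordered product of the variables, which by associativity of `ℍ`
does not depend on the bracketing.
-/

namespace FourColor

/-- A bracketing (association) of a product of `n` ordered variables. -/
inductive Bracketing : ℕ → Type
  | leaf : Bracketing 1
  | node {m n : ℕ} : Bracketing m → Bracketing n → Bracketing (m + n)

/-- Evaluate a bracketing on an ordered list of vectors in `ℝ³`, using the
vector cross product at every internal node. -/
def evalB : {n : ℕ} → Bracketing n → (Fin n → (Fin 3 → ℝ)) → (Fin 3 → ℝ)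
  | _, .leaf, x => x 0
  | _, .node l r, x =>
      crossProduct (evalB l fun i => x (Fin.castAdd _ i)) (evalB r fun j => x (Fin.natAdd _ j))

end FourColor

open Matrix Quaternion

section CommRing

variable {R : Type*} [CommRing R]

def pureQuaternion (v : Fin 3 → R) : ℍ[R] := ⟨0, v 0, v 1, v 2⟩

theorem pureQuaternion_injective : Function.Injective (pureQuaternion (R := R)) := by
  intro u v h
  ext i
  fin_cases i
  · exact congrArg QuaternionAlgebra.imI h
  · exact congrArg QuaternionAlgebra.imJ h
  · exact congrArg QuaternionAlgebra.imK h

theorem pureQuaternion_mul_pureQuaternion (u v : Fin 3 → R) :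
    pureQuaternion u * pureQuaternion v = ((-(u ⬝ᵥ v) : R) : ℍ[R]) + pureQuaternion (u ⨯₃ v) := by
  apply Quaternion.ext <;>
    simp only [Quaternion.re_mul, Quaternion.imI_mul, Quaternion.imJ_mul, Quaternion.imK_mul,
      Quaternion.re_add, Quaternion.imI_add, Quaternion.imJ_add, Quaternion.imK_add,
      Quaternion.re_coe, Quaternion.imI_coe, Quaternion.imJ_coe, Quaternion.imK_coe] <;>
    simp [pureQuaternion, cross_apply, dotProduct, Fin.sum_univ_three] <;> ring

theorem pureQuaternion_cross_of_dotProduct_eq_zero {u v : Fin 3 → R} (h : u ⬝ᵥ v = 0) :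
    pureQuaternion (u ⨯₃ v) = pureQuaternion u * pureQuaternion v := by
  rw [pureQuaternion_mul_pureQuaternion, h, neg_zero, Quaternion.coe_zero, zero_add]

def IsAxisVector (v : Fin 3 → R) : Prop := ∃ i r, v = Pi.single i r

theorem IsAxisVector.cross {u v : Fin 3 → R} (hu : IsAxisVector u) (hv : IsAxisVector v) :
    IsAxisVector (u ⨯₃ v) := by
  obtain ⟨i, s, rfl⟩ := hu
  obtain ⟨j, t, rfl⟩ := hv
  -- for `i ≠ j` in `Fin 3`, `-(i + j)` is the remaining index
  refine ⟨-(i + j), (Pi.single i s ⨯₃ Pi.single j t) (-(i + j)), ?_⟩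
  ext l
  fin_cases i <;> fin_cases j <;> fin_cases l <;> simp +decide [cross_apply, Pi.single_apply]

theorem IsAxisVector.dotProduct_eq_zero_or_cross_eq_zero {u v : Fin 3 → R}
    (hu : IsAxisVector u) (hv : IsAxisVector v) : u ⬝ᵥ v = 0 ∨ u ⨯₃ v = 0 := by
  obtain ⟨i, s, rfl⟩ := hu
  obtain ⟨j, t, rfl⟩ := hv
  rcases eq_or_ne i j with rfl | hij
  · right
    ext l
    fin_cases i <;> fin_cases l <;> simp [cross_apply]
  · left
    simp [hij]

end CommRing

namespace FourColor

theorem evalB_node {m n : ℕ} (l : Bracketing m) (r : Bracketing n)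
    (x : Fin (m + n) → Fin 3 → ℝ) :
    evalB (.node l r) x =
      evalB l (fun i => x (Fin.castAdd n i)) ⨯₃ evalB r (fun j => x (Fin.natAdd m j)) :=
  rfl

theorem isAxisVector_evalB {n : ℕ} (T : Bracketing n) (x : Fin n → Fin 3 → ℝ)
    (hx : ∀ t, IsAxisVector (x t)) : IsAxisVector (evalB T x) := by
  induction T with
  | leaf => exact hx 0
  | node l r ihl ihr =>
    rw [evalB_node]
    exact (ihl _ fun i => hx _).cross (ihr _ fun j => hx _)

theorem pureQuaternion_evalB {n : ℕ} (T : Bracketing n) (x : Fin n → Fin 3 → ℝ)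
    (hx : ∀ t, IsAxisVector (x t)) (hT : evalB T x ≠ 0) :
    pureQuaternion (evalB T x) = (List.ofFn fun t => pureQuaternion (x t)).prod := by
  induction T with
  | leaf => simp [evalB]
  | node l r ihl ihr =>
    rw [evalB_node] at hT ⊢
    set a := evalB l fun i => x (Fin.castAdd _ i)
    set b := evalB r fun j => x (Fin.natAdd _ j)
    have ha : a ≠ 0 := fun h => hT (by simp [h])
    have hb : b ≠ 0 := fun h => hT (by simp [h])
    have hab : a ⬝ᵥ b = 0 :=
      ((isAxisVector_evalB l _ fun i => hx _).dotProduct_eq_zero_or_cross_eq_zero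
        (isAxisVector_evalB r _ fun j => hx _)).resolve_right hT
    rw [pureQuaternion_cross_of_dotProduct_eq_zero hab, ihl _ (fun i => hx _) ha,
      ihr _ (fun j => hx _) hb, List.ofFn_add, List.prod_append]
    rfl

theorem evalB_eq_evalB_of_ne_zero {n : ℕ} (L R : Bracketing n) (x : Fin n → Fin 3 → ℝ)
    (hx : ∀ t, IsAxisVector (x t)) (hL : evalB L x ≠ 0) (hR : evalB R x ≠ 0) :
    evalB L x = evalB R x :=
  pureQuaternion_injective <| by
    rw [pureQuaternion_evalB L x hx hL, pureQuaternion_evalB R x hx hR]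

end FourColor

open FourColor

/-- if two bracketings `L, R` of the same ordered list of
variables both evaluate to a nonzero vector under an assignment of the values
`i, j, k` (the standard basis of `ℝ³`) to the variables, then the two
evaluations are equal. -/
theorem stmt17 (n : ℕ) (L R : Bracketing n) (x : Fin n → (Fin 3 → ℝ))
    (hx : ∀ t, x t = ![1, 0, 0] ∨ x t = ![0, 1, 0] ∨ x t = ![0, 0, 1])
    (hL : evalB L x ≠ 0) (hR : evalB R x ≠ 0) :
    evalB L x = evalB R x := by
  have hx_axis : ∀ t, IsAxisVector (x t) := fun t => by
    rcases hx t with h | h | h <;> rw [h]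
    · exact ⟨0, 1, by ext l; fin_cases l <;> simp⟩
    · exact ⟨1, 1, by ext l; fin_cases l <;> simp⟩
    · exact ⟨2, 1, by ext l; fin_cases l <;> simp⟩
  exact evalB_eq_evalB_of_ne_zero L R x hx_axis hL hR
end
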